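/- arXiv:2111.05277 — 5 statements merged into one kernel-verified Lean document; each statement's English description precedes it below -/
import Mathlib

section
/- Suppose Y^{(d)} ⊥ D | X, Y^{(d)} ⊥ S | (D, X), and Y = Y^{(d)} on the event {D = d} (no interference). Define γ₀(1,d,x) = E[Y | S=1, D=d, X=x]. Then γ₀(1,d,x) = E[Y^{(d)} | X = x], and consequently E[Y^{(d)}] = E[γ₀(1,d,X)] (the average treatment outcome is identified by the regression on the selected sample averaged over the covariate distribution). -/
/-!
Write `E = E[Y⁽ᵈ⁾ | X]` and `A = {S = 1, D = d}`. The two exchangeability assumptions contract to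
`E[Y⁽ᵈ⁾ 1_A | X] = E · P(A | X)`: first `Y⁽ᵈ⁾ ⊥ D | X` gives `E[Y⁽ᵈ⁾ | D, X] = E`, and then
`Y⁽ᵈ⁾ ⊥ S | (D, X)` factors the conditional expectation on `{D = d}`. On the other hand, since
`Y = Y⁽ᵈ⁾` on `A` and `γ₀(X)` is a version of `E[Y | A, X]`, also
`E[Y⁽ᵈ⁾ 1_A | X] = γ₀(X) · P(A | X)`.
Overlap lets us cancel `P(A | X)`, and integrating gives `E[Y⁽ᵈ⁾] = E[γ₀(X)]`.
-/

open MeasureTheory ProbabilityTheory Set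

lemma Set.indicator_one_mul {ι M₀ : Type*} [MulZeroOneClass M₀] (s : Set ι) (f : ι → M₀) :
    s.indicator (fun _ => 1) * f = s.indicator f :=
  funext fun i => by by_cases h : i ∈ s <;> simp [h]

lemma MeasurableSpace.comap_le_comap_prodMk_right {Ω 𝒟 𝒳 : Type*} [MeasurableSpace 𝒟]
    [m𝒳 : MeasurableSpace 𝒳] (D : Ω → 𝒟) (X : Ω → 𝒳) :
    MeasurableSpace.comap X m𝒳 ≤ MeasurableSpace.comap (fun ω => (D ω, X ω)) inferInstance :=
  le_of_le_of_eq le_sup_right (MeasurableSpace.comap_prodMk D X).symm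

section CondExp

variable {Ω : Type*} {m : MeasurableSpace Ω} [mΩ : MeasurableSpace Ω] {μ : Measure Ω}

lemma MeasureTheory.Integrable.mul_condExp_indicator {f : Ω → ℝ} (hf : Integrable f μ)
    (hm : m ≤ mΩ) (s : Set Ω) : Integrable (f * μ⟦s | m⟧) μ :=
  hf.mul_bdd (c := 1) (stronglyMeasurable_condExp.mono hm).aestronglyMeasurable <|
    ae_bdd_norm_condExp_of_ae_bdd_norm <| ae_of_all _ fun ω => by
      by_cases h : ω ∈ s <;> simp [h]

lemma setIntegral_condExp_mul (hm : m ≤ mΩ) [SigmaFinite (μ.trim hm)] {f g : Ω → ℝ}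
    {C : Set Ω} (hC : MeasurableSet[m] C) (hg : StronglyMeasurable[m] g)
    (hfg : Integrable (f * g) μ) (hf : Integrable f μ) :
    ∫ ω in C, (μ[f | m] * g) ω ∂μ = ∫ ω in C, (f * g) ω ∂μ := by
  rw [← setIntegral_condExp hm hfg hC]
  exact setIntegral_congr_ae (hm C hC)
    ((condExp_mul_of_stronglyMeasurable_right hg hfg hf).mono fun _ h _ => h.symm)

variable [IsFiniteMeasure μ]

lemma setIntegral_mul_condExp_indicator (hm : m ≤ mΩ) {φ : Ω → ℝ} {C A : Set Ω}
    (hC : MeasurableSet[m] C) (hφ : StronglyMeasurable[m] φ) (hφi : Integrable φ μ)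
    (hA : MeasurableSet A) :
    ∫ ω in C, (φ * μ⟦A | m⟧) ω ∂μ = ∫ ω in C ∩ A, φ ω ∂μ := by
  have hAi : Integrable (A.indicator fun _ => (1 : ℝ)) μ := (integrable_const 1).indicator hA
  have hAφ : Integrable (A.indicator (fun _ => (1 : ℝ)) * φ) μ := by
    rw [indicator_one_mul]; exact hφi.indicator hA
  rw [mul_comm, setIntegral_condExp_mul hm hC hφ hAφ hAi, indicator_one_mul,
    setIntegral_indicator hA]

theorem condExp_indicator_ae_eq_mul_of_forall_setIntegral_eq (hm : m ≤ mΩ) {f φ : Ω → ℝ}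
    {A : Set Ω} (hA : MeasurableSet A) (hf : Integrable f μ) (hφ : StronglyMeasurable[m] φ)
    (hφi : Integrable φ μ)
    (hfφ : ∀ C, MeasurableSet[m] C → ∫ ω in A ∩ C, f ω ∂μ = ∫ ω in A ∩ C, φ ω ∂μ) :
    μ[A.indicator f | m] =ᵐ[μ] φ * μ⟦A | m⟧ := by
  refine (ae_eq_condExp_of_forall_setIntegral_eq hm (hf.indicator hA)
    (fun _ _ _ => (hφi.mul_condExp_indicator hm _).integrableOn) (fun C hC _ => ?_)
    (hφ.mul stronglyMeasurable_condExp).aestronglyMeasurable).symm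
  rw [setIntegral_mul_condExp_indicator hm hC hφ hφi hA, setIntegral_indicator hA, inter_comm,
    hfφ C hC]

end CondExp

section CondIndepFun

variable {Ω β : Type*} {m : MeasurableSpace Ω} [mΩ : MeasurableSpace Ω] [StandardBorelSpace Ω]
  {μ : Measure Ω} [IsFiniteMeasure μ] [MeasurableSpace β]

theorem ProbabilityTheory.CondIndepFun.setIntegral_inter_preimage {hm : m ≤ mΩ} {f : Ω → ℝ}
    {g : Ω → β} (hfg : CondIndepFun m hm f g μ) (hf : Measurable f) (hg : Measurable g)
    {t : Set β} (ht : MeasurableSet t) {C : Set Ω} (hC : MeasurableSet[m] C) :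
    ∫ ω in C ∩ g ⁻¹' t, f ω ∂μ = ∫ ω in C, (f * μ⟦g ⁻¹' t | m⟧) ω ∂μ := by
  set P := μ⟦g ⁻¹' t | m⟧
  have hP_nonneg : 0 ≤ᵐ[μ] P :=
    condExp_nonneg (ae_of_all _ fun ω => indicator_nonneg (fun _ _ => zero_le_one) ω)
  have hP : StronglyMeasurable[m] P := stronglyMeasurable_condExp
  -- On the sets `f ⁻¹' s` this is the product rule defining conditional independence.
  have hlaw : (μ.restrict (C ∩ g ⁻¹' t)).map f
      = ((μ.restrict C).withDensity fun ω => ENNReal.ofReal (P ω)).map f := by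
    ext s hs
    have hfs : MeasurableSet (f ⁻¹' s) := hf hs
    rw [Measure.map_apply hf hs, Measure.map_apply hf hs, Measure.restrict_apply hfs,
      withDensity_apply _ hfs, Measure.restrict_restrict hfs, ← ofReal_measureReal,
      ← ofReal_integral_eq_lintegral_ofReal integrable_condExp.integrableOn
        (ae_restrict_of_ae hP_nonneg)]
    congr 1
    calc μ.real (f ⁻¹' s ∩ (C ∩ g ⁻¹' t))
        = ∫ ω in C, (μ⟦f ⁻¹' s ∩ g ⁻¹' t | m⟧) ω ∂μ := by
          rw [setIntegral_condExp hm ((integrable_const 1).indicator (hfs.inter (hg ht))) hC,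
            setIntegral_indicator (hfs.inter (hg ht)), setIntegral_const, smul_eq_mul, mul_one,
            inter_left_comm]
      _ = ∫ ω in C, (P * μ⟦f ⁻¹' s | m⟧) ω ∂μ :=
          setIntegral_congr_ae (hm C hC) <|
            ((condIndepFun_iff_condExp_inter_preimage_eq_mul hf hg).mp hfg s t hs ht).mono
              fun ω h _ => h.trans (mul_comm _ _)
      _ = ∫ ω in f ⁻¹' s ∩ C, P ω ∂μ := by
          rw [setIntegral_mul_condExp_indicator hm hC hP integrable_condExp hfs, inter_comm]
  calc ∫ ω in C ∩ g ⁻¹' t, f ω ∂μ = ∫ x, x ∂((μ.restrict (C ∩ g ⁻¹' t)).map f) :=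
        (integral_map (f := fun x => x) hf.aemeasurable aestronglyMeasurable_id).symm
    _ = ∫ ω in C, (ENNReal.ofReal (P ω)).toReal • f ω ∂μ := by
        rw [hlaw, integral_map (f := fun x => x) hf.aemeasurable aestronglyMeasurable_id,
          integral_withDensity_eq_integral_toReal_smul (hP.mono hm).measurable.ennreal_ofReal
            (ae_of_all _ fun _ => ENNReal.ofReal_lt_top)]
    _ = ∫ ω in C, (f * P) ω ∂μ :=
        setIntegral_congr_ae (hm C hC) <| hP_nonneg.mono fun ω h _ => by
          simp [ENNReal.toReal_ofReal h, mul_comm]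

end CondIndepFun

section Exchangeability

variable {Ω 𝒟 𝒳 : Type*} [mΩ : MeasurableSpace Ω] [MeasurableSpace 𝒟] [m𝒳 : MeasurableSpace 𝒳]
  {μ : Measure Ω}

theorem setIntegral_preimage_prodMk_eq_of_forall_prod {f h : Ω → ℝ} (hf : Integrable f μ)
    (hh : Integrable h μ) {D : Ω → 𝒟} {X : Ω → 𝒳} (hD : Measurable D) (hX : Measurable X)
    (hprod : ∀ u v, MeasurableSet u → MeasurableSet v →
      ∫ ω in D ⁻¹' u ∩ X ⁻¹' v, f ω ∂μ = ∫ ω in D ⁻¹' u ∩ X ⁻¹' v, h ω ∂μ)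
    {T : Set (𝒟 × 𝒳)} (hT : MeasurableSet T) :
    ∫ ω in (fun ω => (D ω, X ω)) ⁻¹' T, f ω ∂μ = ∫ ω in (fun ω => (D ω, X ω)) ⁻¹' T, h ω ∂μ := by
  have hDX : Measurable fun ω => (D ω, X ω) := hD.prodMk hX
  have hmap {T} (hT : MeasurableSet T) {g : Ω → ℝ} (hg : Integrable g μ) :
      (μ.withDensityᵥ g).map (fun ω => (D ω, X ω)) T
        = ∫ ω in (fun ω => (D ω, X ω)) ⁻¹' T, g ω ∂μ := by
    rw [VectorMeasure.map_apply _ hDX hT, withDensityᵥ_apply hg (hDX hT)]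
  have hlaw : (μ.withDensityᵥ f).map (fun ω => (D ω, X ω))
      = (μ.withDensityᵥ h).map (fun ω => (D ω, X ω)) := by
    refine VectorMeasure.ext_of_generateFrom _ ?_ generateFrom_prod.symm isPiSystem_prod ?_
    · rintro _ ⟨u, hu, v, hv, rfl⟩
      rw [hmap (hu.prod hv) hf, hmap (hu.prod hv) hh]
      exact hprod u v hu hv
    · rw [hmap MeasurableSet.univ hf, hmap MeasurableSet.univ hh]
      simpa using hprod univ univ MeasurableSet.univ MeasurableSet.univ
  rw [← hmap hT hf, ← hmap hT hh, hlaw]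

variable [StandardBorelSpace Ω] [IsFiniteMeasure μ]

theorem ProbabilityTheory.CondIndepFun.condExp_comap_prodMk_ae_eq {f : Ω → ℝ} {D : Ω → 𝒟}
    {X : Ω → 𝒳} (hX : Measurable X)
    (hfD : CondIndepFun (MeasurableSpace.comap X m𝒳) hX.comap_le f D μ)
    (hf : Measurable f) (hD : Measurable D) (hfi : Integrable f μ) :
    μ[f | MeasurableSpace.comap (fun ω => (D ω, X ω)) inferInstance]
      =ᵐ[μ] μ[f | MeasurableSpace.comap X m𝒳] := by
  set E := μ[f | MeasurableSpace.comap X m𝒳]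
  have hE : StronglyMeasurable[MeasurableSpace.comap X m𝒳] E := stronglyMeasurable_condExp
  refine (ae_eq_condExp_of_forall_setIntegral_eq (hD.prodMk hX).comap_le hfi
    (fun _ _ _ => integrable_condExp.integrableOn) ?_
    (hE.mono (MeasurableSpace.comap_le_comap_prodMk_right D X)).aestronglyMeasurable).symm
  rintro _ ⟨T, hT, rfl⟩ -
  refine setIntegral_preimage_prodMk_eq_of_forall_prod integrable_condExp hfi hD hX
    (fun u v hu hv => ?_) hT
  have hv : MeasurableSet[MeasurableSpace.comap X m𝒳] (X ⁻¹' v) := ⟨v, hv, rfl⟩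
  calc ∫ ω in D ⁻¹' u ∩ X ⁻¹' v, E ω ∂μ
      = ∫ ω in X ⁻¹' v, (E * μ⟦D ⁻¹' u | MeasurableSpace.comap X m𝒳⟧) ω ∂μ := by
        rw [setIntegral_mul_condExp_indicator hX.comap_le hv hE integrable_condExp (hD hu),
          inter_comm]
    _ = ∫ ω in X ⁻¹' v, (f * μ⟦D ⁻¹' u | MeasurableSpace.comap X m𝒳⟧) ω ∂μ :=
        setIntegral_condExp_mul hX.comap_le hv stronglyMeasurable_condExp
          (hfi.mul_condExp_indicator hX.comap_le _) hfi
    _ = ∫ ω in D ⁻¹' u ∩ X ⁻¹' v, f ω ∂μ := by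
        rw [← hfD.setIntegral_inter_preimage hf hD hu hv, inter_comm]

theorem condExp_indicator_inter_preimage_ae_eq_of_condIndepFun {γ : Type*} [MeasurableSpace γ]
    {f : Ω → ℝ} {S : Ω → γ} {D : Ω → 𝒟} {X : Ω → 𝒳} (hf : Measurable f) (hS : Measurable S)
    (hD : Measurable D) (hX : Measurable X) (hfi : Integrable f μ)
    (hfD : CondIndepFun (MeasurableSpace.comap X m𝒳) hX.comap_le f D μ)
    (hfS : CondIndepFun (MeasurableSpace.comap (fun ω => (D ω, X ω)) inferInstance)
      (hD.prodMk hX).comap_le f S μ)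
    {s : Set γ} {u : Set 𝒟} (hs : MeasurableSet s) (hu : MeasurableSet u) :
    μ[(S ⁻¹' s ∩ D ⁻¹' u).indicator f | MeasurableSpace.comap X m𝒳]
      =ᵐ[μ] μ[f | MeasurableSpace.comap X m𝒳]
        * μ⟦S ⁻¹' s ∩ D ⁻¹' u | MeasurableSpace.comap X m𝒳⟧ := by
  set E := μ[f | MeasurableSpace.comap X m𝒳]
  have hE : StronglyMeasurable[MeasurableSpace.comap X m𝒳] E := stronglyMeasurable_condExp
  have hle := MeasurableSpace.comap_le_comap_prodMk_right D X
  have hDX := (hD.prodMk hX).comap_le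
  refine condExp_indicator_ae_eq_mul_of_forall_setIntegral_eq hX.comap_le ((hS hs).inter (hD hu))
    hfi hE integrable_condExp fun C hC => ?_
  have hCu : MeasurableSet[MeasurableSpace.comap (fun ω => (D ω, X ω)) inferInstance]
      (C ∩ D ⁻¹' u) :=
    (hle C hC).inter ⟨u ×ˢ univ, hu.prod .univ, by ext; simp⟩
  have hsets : S ⁻¹' s ∩ D ⁻¹' u ∩ C = C ∩ D ⁻¹' u ∩ S ⁻¹' s := by
    rw [inter_comm, inter_assoc, inter_comm (S ⁻¹' s)]
  rw [hsets]
  calc ∫ ω in C ∩ D ⁻¹' u ∩ S ⁻¹' s, f ω ∂μ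
      = ∫ ω in C ∩ D ⁻¹' u,
          (f * μ⟦S ⁻¹' s | MeasurableSpace.comap (fun ω => (D ω, X ω)) inferInstance⟧) ω ∂μ :=
        hfS.setIntegral_inter_preimage hf hS hs hCu
    _ = ∫ ω in C ∩ D ⁻¹' u,
          (μ[f | MeasurableSpace.comap (fun ω => (D ω, X ω)) inferInstance]
            * μ⟦S ⁻¹' s | MeasurableSpace.comap (fun ω => (D ω, X ω)) inferInstance⟧) ω ∂μ :=
        (setIntegral_condExp_mul hDX hCu stronglyMeasurable_condExp
          (hfi.mul_condExp_indicator hDX _) hfi).symm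
    _ = ∫ ω in C ∩ D ⁻¹' u,
          (E * μ⟦S ⁻¹' s | MeasurableSpace.comap (fun ω => (D ω, X ω)) inferInstance⟧) ω ∂μ :=
        setIntegral_congr_ae (hDX _ hCu) <|
          (hfD.condExp_comap_prodMk_ae_eq hX hf hD hfi).mono fun ω h _ => by
            simp only [Pi.mul_apply, h]; rfl
    _ = ∫ ω in C ∩ D ⁻¹' u ∩ S ⁻¹' s, E ω ∂μ :=
        setIntegral_mul_condExp_indicator hDX hCu (hE.mono hle) integrable_condExp (hS hs)

end Exchangeability

theorem stmt_3_general {Ω 𝒟 𝒳 : Type*} [MeasurableSpace Ω] [StandardBorelSpace Ω]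
    [MeasurableSpace 𝒟] [m𝒳 : MeasurableSpace 𝒳] [MeasurableSingletonClass 𝒟]
    (μ : Measure Ω) [IsProbabilityMeasure μ]
    (Y Yd : Ω → ℝ) (S : Ω → Bool) (D : Ω → 𝒟) (X : Ω → 𝒳)
    (hYd : Measurable Yd) (hS : Measurable S) (hD : Measurable D)
    (hX : Measurable X) (d : 𝒟)
    (hYdInt : Integrable Yd μ)
    -- conditional exchangeability: `Y⁽ᵈ⁾ ⊥ D | X`
    (hCI1 : CondIndepFun (MeasurableSpace.comap X m𝒳)
      (MeasurableSpace.comap_le_iff_le_map.mpr hX.le_map) Yd D μ)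
    -- conditional exchangeability: `Y⁽ᵈ⁾ ⊥ S | (D, X)`
    (hCI2 : CondIndepFun (MeasurableSpace.comap (fun ω => (D ω, X ω)) inferInstance)
      (MeasurableSpace.comap_le_iff_le_map.mpr (hD.prodMk hX).le_map) Yd S μ)
    -- no interference
    (hni : ∀ ω, D ω = d → Y ω = Yd ω)
    -- overlap: `P(S = 1, D = d | X) > 0` almost surely
    (hov : ∀ᵐ ω ∂μ,
      0 < (μ[Set.indicator {ω' | S ω' = true ∧ D ω' = d} (fun _ => (1 : ℝ)) |
        MeasurableSpace.comap X m𝒳]) ω)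
    -- `γ₀` is a version of `x ↦ E[Y | S = 1, D = d, X = x]`
    (γ₀ : 𝒳 → ℝ) (hγ₀ : Measurable γ₀)
    (hγ₀Int : Integrable (fun ω => γ₀ (X ω)) μ)
    (hver : ∀ B : Set 𝒳, MeasurableSet B →
      ∫ ω in {ω | S ω = true ∧ D ω = d} ∩ X ⁻¹' B, Y ω ∂μ
        = ∫ ω in {ω | S ω = true ∧ D ω = d} ∩ X ⁻¹' B, γ₀ (X ω) ∂μ) :
    (fun ω => γ₀ (X ω)) =ᵐ[μ] μ[Yd | MeasurableSpace.comap X m𝒳]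
      ∧ ∫ ω, Yd ω ∂μ = ∫ ω, γ₀ (X ω) ∂μ := by
  have hmX := hX.comap_le
  have hA : MeasurableSet {ω | S ω = true ∧ D ω = d} :=
    (hS (measurableSet_singleton true)).inter (hD (measurableSet_singleton d))
  have hYd_factor := condExp_indicator_inter_preimage_ae_eq_of_condIndepFun hYd hS hD hX hYdInt
    hCI1 hCI2 (measurableSet_singleton true) (measurableSet_singleton d)
  have hγ_factor := condExp_indicator_ae_eq_mul_of_forall_setIntegral_eq
    (φ := fun ω => γ₀ (X ω)) hmX hA hYdInt
    (hγ₀.comp (comap_measurable X)).stronglyMeasurable hγ₀Int <| by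
      rintro _ ⟨B, hB, rfl⟩
      rw [← hver B hB]
      exact setIntegral_congr_fun (hA.inter (hX hB)) fun ω hω => (hni ω hω.1.2).symm
  have hγ : (fun ω => γ₀ (X ω)) =ᵐ[μ] μ[Yd | MeasurableSpace.comap X m𝒳] := by
    filter_upwards [hYd_factor.symm.trans hγ_factor, hov] with ω h hpos
    exact (mul_right_cancel₀ hpos.ne' h).symm
  exact ⟨hγ, (integral_condExp hmX).symm.trans (integral_congr_ae hγ.symm)⟩

/-- Static identification: under no interference (`Y = Y⁽ᵈ⁾` on `{D = d}`), conditional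
exchangeability (`Y⁽ᵈ⁾ ⊥ D | X` and `Y⁽ᵈ⁾ ⊥ S | (D,X)`) and overlap (the conditional
probability of `{S = 1, D = d}` given `X` is a.s. positive), any version `γ₀` of
`x ↦ E[Y | S=1, D=d, X=x]` satisfies `γ₀(X) = E[Y⁽ᵈ⁾ | X]` a.e., and consequently
`E[Y⁽ᵈ⁾] = E[γ₀(X)]`. -/
theorem stmt_3 {Ω 𝒟 𝒳 : Type*} [MeasurableSpace Ω] [StandardBorelSpace Ω] [Nonempty Ω]
    [MeasurableSpace 𝒟] [m𝒳 : MeasurableSpace 𝒳] [MeasurableSingletonClass 𝒟]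
    (μ : Measure Ω) [IsProbabilityMeasure μ]
    (Y Yd : Ω → ℝ) (S : Ω → Bool) (D : Ω → 𝒟) (X : Ω → 𝒳)
    (hY : Measurable Y) (hYd : Measurable Yd) (hS : Measurable S) (hD : Measurable D)
    (hX : Measurable X) (d : 𝒟)
    (hYdInt : Integrable Yd μ)
    -- conditional exchangeability: `Y⁽ᵈ⁾ ⊥ D | X`
    (hCI1 : CondIndepFun (MeasurableSpace.comap X m𝒳)
      (MeasurableSpace.comap_le_iff_le_map.mpr hX.le_map) Yd D μ)
    -- conditional exchangeability: `Y⁽ᵈ⁾ ⊥ S | (D, X)`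
    (hCI2 : CondIndepFun (MeasurableSpace.comap (fun ω => (D ω, X ω)) inferInstance)
      (MeasurableSpace.comap_le_iff_le_map.mpr (hD.prodMk hX).le_map) Yd S μ)
    -- no interference
    (hni : ∀ ω, D ω = d → Y ω = Yd ω)
    -- overlap: `P(S = 1, D = d | X) > 0` almost surely
    (hov : ∀ᵐ ω ∂μ,
      0 < (μ[Set.indicator {ω' | S ω' = true ∧ D ω' = d} (fun _ => (1 : ℝ)) |
        MeasurableSpace.comap X m𝒳]) ω)
    -- `γ₀` is a version of `x ↦ E[Y | S = 1, D = d, X = x]`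
    (γ₀ : 𝒳 → ℝ) (hγ₀ : Measurable γ₀)
    (hγ₀Int : Integrable (fun ω => γ₀ (X ω)) μ)
    (hver : ∀ B : Set 𝒳, MeasurableSet B →
      ∫ ω in {ω | S ω = true ∧ D ω = d} ∩ X ⁻¹' B, Y ω ∂μ
        = ∫ ω in {ω | S ω = true ∧ D ω = d} ∩ X ⁻¹' B, γ₀ (X ω) ∂μ) :
    (fun ω => γ₀ (X ω)) =ᵐ[μ] μ[Yd | MeasurableSpace.comap X m𝒳]
      ∧ ∫ ω, Yd ω ∂μ = ∫ ω, γ₀ (X ω) ∂μ :=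
  stmt_3_general (m𝒳 := m𝒳) μ Y Yd S D X hYd hS hD hX d hYdInt hCI1 hCI2 hni hov γ₀ hγ₀ hγ₀Int hver
end

section
/- Mean square continuity under bounded propensities: if P(S=1 | D=d, X) ≥ ε and P(D=d | X) ≥ ε almost surely for some ε > 0, then for any measurable square-integrable function γ, E[γ(1,d,X)²] ≤ ε^{−2} · E[γ(S,D,X)²]. -/
/-!
Disintegrating along `X`: because `π ∘ X` and `ρ ∘ X` are versions of the two conditional
probabilities, `E[f(X); S = 1, D = d] = E[π(X) ρ(X) f(X)] ≥ ε² E[f(X)]` for every measurable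
`f ≥ 0`. Take `f = γ(1, d, ·)²`, which agrees with `γ(S, D, X)²` on `{S = 1, D = d}`.
The version identities are Bochner integrals, hence junk unless `π ∘ X`, `ρ ∘ X` are integrable;
integrability comes from applying them on the truncations `{ρ ≤ n}` and letting `n → ∞`.
-/

open MeasureTheory

section

variable {α : Type*} [MeasurableSpace α]

lemma integrable_of_setIntegral_sublevel_le {μ : Measure α} [IsFiniteMeasure μ] {f : α → ℝ}
    (hf : Measurable f) (hf0 : 0 ≤ f) {C : ℝ}
    (hC : ∀ n : ℕ, ∫ x in {x | f x ≤ n}, f x ∂μ ≤ C) :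
    Integrable f μ := by
  have hcover : (⋃ n : ℕ, {x | f x ≤ n}) = Set.univ :=
    Set.eq_univ_of_forall fun x => Set.mem_iUnion.2 ⟨⌈f x⌉₊, Nat.le_ceil (f x)⟩
  have hdir : Directed (· ⊆ ·) fun n : ℕ => {x | f x ≤ n} :=
    Monotone.directed_le fun m n hmn x (hx : f x ≤ m) =>
      show f x ≤ n from hx.trans (Nat.cast_le.2 hmn)
  have hbound (n : ℕ) :
      ∫⁻ x in {x | f x ≤ n}, ENNReal.ofReal (f x) ∂μ ≤ ENNReal.ofReal C := by
    have hint : IntegrableOn f {x | f x ≤ n} μ :=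
      Measure.integrableOn_of_bounded (M := n) (measure_ne_top _ _) hf.aestronglyMeasurable
        ((ae_restrict_iff' (measurableSet_le hf measurable_const)).2 <| ae_of_all _ fun x hx => by
          rw [Real.norm_of_nonneg (hf0 x)]; exact hx)
    rw [← ofReal_integral_eq_lintegral_ofReal hint (ae_of_all _ hf0)]
    exact ENNReal.ofReal_le_ofReal (hC n)
  refine ⟨hf.aestronglyMeasurable, (hasFiniteIntegral_iff_ofReal (ae_of_all _ hf0)).2 ?_⟩
  calc ∫⁻ x, ENNReal.ofReal (f x) ∂μ
      = ⨆ n : ℕ, ∫⁻ x in {x | f x ≤ n}, ENNReal.ofReal (f x) ∂μ := by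
        rw [← setLIntegral_iUnion_of_directed _ hdir, hcover, Measure.restrict_univ]
    _ ≤ ENNReal.ofReal C := iSup_le hbound
    _ < ⊤ := ENNReal.ofReal_lt_top

lemma eq_withDensity_of_forall_measureReal_eq_setIntegral {ν μ : Measure α} [IsFiniteMeasure ν]
    [IsFiniteMeasure μ] {g : α → ℝ} (hg : Measurable g) (hg0 : 0 ≤ g)
    (h : ∀ s, MeasurableSet s → ν.real s = ∫ x in s, g x ∂μ) :
    ν = μ.withDensity fun x => ENNReal.ofReal (g x) := by
  have hint : Integrable g μ :=
    integrable_of_setIntegral_sublevel_le hg hg0 (C := ν.real Set.univ) fun n => by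
      rw [← h _ (measurableSet_le hg measurable_const)]
      exact measureReal_mono (Set.subset_univ _)
  ext s hs
  rw [withDensity_apply _ hs, ← ofReal_integral_eq_lintegral_ofReal hint.integrableOn
    (ae_of_all _ hg0), ← h s hs, ofReal_measureReal]

lemma setIntegral_ite_one_zero_eq_measureReal {μ : Measure α} {p : α → Prop} [DecidablePred p]
    (hp : MeasurableSet {x | p x}) (s : Set α) :
    ∫ x in s, (if p x then (1 : ℝ) else 0) ∂μ = μ.real ({x | p x} ∩ s) := by
  rw [← measureReal_restrict_apply hp, ← integral_indicator_one hp]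
  simp only [Set.indicator_apply, Set.mem_ofPred_eq, Pi.one_apply]

end

section

variable {Ω 𝒳 : Type*} [MeasurableSpace Ω] [MeasurableSpace 𝒳]

/-- `ρ ∘ X` is a version of the conditional probability `P(A | X)` under `μ`. -/
def IsCondProbVersion (μ : Measure Ω) (X : Ω → 𝒳) (A : Set Ω) (ρ : 𝒳 → ℝ) : Prop :=
  ∀ B, MeasurableSet B → μ.real (A ∩ X ⁻¹' B) = ∫ ω in X ⁻¹' B, ρ (X ω) ∂μ

lemma IsCondProbVersion.setLIntegral_comp_eq_lintegral_mul {μ : Measure Ω} [IsFiniteMeasure μ]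
    {X : Ω → 𝒳} (hX : Measurable X) {A : Set Ω} {ρ : 𝒳 → ℝ} (hρ : Measurable ρ) (hρ0 : 0 ≤ ρ)
    (hver : IsCondProbVersion μ X A ρ) {f : 𝒳 → ENNReal} (hf : Measurable f) :
    ∫⁻ ω in A, f (X ω) ∂μ = ∫⁻ ω, ENNReal.ofReal (ρ (X ω)) * f (X ω) ∂μ := by
  have hmap :
      (μ.restrict A).map X = (μ.map X).withDensity fun x => ENNReal.ofReal (ρ x) := by
    refine eq_withDensity_of_forall_measureReal_eq_setIntegral hρ hρ0 fun B hB => ?_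
    rw [map_measureReal_apply hX hB, measureReal_restrict_apply (hX hB), Set.inter_comm,
      hver B hB, setIntegral_map hB hρ.aestronglyMeasurable hX.aemeasurable]
  rw [← lintegral_map hf hX, hmap,
    lintegral_withDensity_eq_lintegral_mul _ hρ.ennreal_ofReal hf,
    lintegral_map (hρ.ennreal_ofReal.mul hf) hX]
  rfl

lemma ofReal_sq_mul_lintegral_le_of_isCondProbVersion {μ : Measure Ω} [IsFiniteMeasure μ]
    {X : Ω → 𝒳} (hX : Measurable X) {A A' : Set Ω} {π ρ : 𝒳 → ℝ} (hπ : Measurable π)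
    (hρ : Measurable ρ) {ε : ℝ} (hε : 0 ≤ ε) (hπε : ∀ x, ε ≤ π x) (hρε : ∀ x, ε ≤ ρ x)
    (hπA : IsCondProbVersion μ X A π) (hρA' : IsCondProbVersion (μ.restrict A) X A' ρ)
    {f : 𝒳 → ENNReal} (hf : Measurable f) :
    ENNReal.ofReal ε ^ 2 * ∫⁻ ω, f (X ω) ∂μ ≤ ∫⁻ ω in A', f (X ω) ∂μ.restrict A := by
  calc ENNReal.ofReal ε ^ 2 * ∫⁻ ω, f (X ω) ∂μ
      = ∫⁻ ω, ENNReal.ofReal ε * (ENNReal.ofReal ε * f (X ω)) ∂μ := by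
        rw [lintegral_const_mul' _ _ ENNReal.ofReal_ne_top,
          lintegral_const_mul' _ _ ENNReal.ofReal_ne_top, sq, mul_assoc]
    _ ≤ ∫⁻ ω, ENNReal.ofReal (π (X ω)) * (ENNReal.ofReal (ρ (X ω)) * f (X ω)) ∂μ :=
        lintegral_mono fun ω => mul_le_mul' (ENNReal.ofReal_le_ofReal (hπε _))
          (mul_le_mul' (ENNReal.ofReal_le_ofReal (hρε _)) le_rfl)
    _ = ∫⁻ ω in A, ENNReal.ofReal (ρ (X ω)) * f (X ω) ∂μ :=
        (hπA.setLIntegral_comp_eq_lintegral_mul hX hπ (fun x => hε.trans (hπε x))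
          (hρ.ennreal_ofReal.mul hf)).symm
    _ = ∫⁻ ω in A', f (X ω) ∂μ.restrict A :=
        (hρA'.setLIntegral_comp_eq_lintegral_mul hX hρ (fun x => hε.trans (hρε x)) hf).symm

end

/-- Mean square continuity under bounded propensities: if versions `ρ` of
`P(S=1 | D=d, X)` and `π` of `P(D=d | X)` satisfy `ρ, π ≥ ε > 0`, then for any
measurable square-integrable `γ`, `E[γ(1,d,X)²] ≤ ε⁻² E[γ(S,D,X)²]`. -/
theorem stmt_6 {Ω 𝒟 𝒳 : Type*} [MeasurableSpace Ω] [MeasurableSpace 𝒟] [MeasurableSpace 𝒳]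
    [MeasurableSingletonClass 𝒟] [DecidableEq 𝒟]
    (μ : Measure Ω) [IsProbabilityMeasure μ]
    (S : Ω → Bool) (D : Ω → 𝒟) (X : Ω → 𝒳)
    (hS : Measurable S) (hD : Measurable D) (hX : Measurable X) (d : 𝒟)
    (π ρ : 𝒳 → ℝ) (hπ : Measurable π) (hρ : Measurable ρ)
    (ε : ℝ) (hε : 0 < ε) (hπε : ∀ x, ε ≤ π x) (hρε : ∀ x, ε ≤ ρ x)
    -- `π` is a version of `P(D = d | X)`:
    (hπver : ∀ B : Set 𝒳, MeasurableSet B →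
      ∫ ω in X ⁻¹' B, (if D ω = d then (1 : ℝ) else 0) ∂μ
        = ∫ ω in X ⁻¹' B, π (X ω) ∂μ)
    -- `ρ` is a version of `P(S = 1 | D = d, X)`:
    (hρver : ∀ B : Set 𝒳, MeasurableSet B →
      ∫ ω in {ω | D ω = d} ∩ X ⁻¹' B, (if S ω then (1 : ℝ) else 0) ∂μ
        = ∫ ω in {ω | D ω = d} ∩ X ⁻¹' B, ρ (X ω) ∂μ)
    (γ : Bool × 𝒟 × 𝒳 → ℝ) (hγ : Measurable γ)
    (hγ2 : Integrable (fun ω => γ (S ω, D ω, X ω) ^ 2) μ)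
    (hγ2' : Integrable (fun ω => γ (true, d, X ω) ^ 2) μ) :
    ∫ ω, γ (true, d, X ω) ^ 2 ∂μ ≤ ε⁻¹ ^ 2 * ∫ ω, γ (S ω, D ω, X ω) ^ 2 ∂μ := by
  have hAd : MeasurableSet {ω | D ω = d} := hD (measurableSet_singleton d)
  have hAs : MeasurableSet {ω | S ω = true} := hS (measurableSet_singleton true)
  have hπA : IsCondProbVersion μ X {ω | D ω = d} π := fun B hB => by
    rw [← hπver B hB, setIntegral_ite_one_zero_eq_measureReal hAd]
  have hρA : IsCondProbVersion (μ.restrict {ω | D ω = d}) X {ω | S ω = true} ρ := by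
    intro B hB
    rw [measureReal_restrict_apply (hAs.inter (hX hB)), Measure.restrict_restrict (hX hB),
      Set.inter_comm (X ⁻¹' B), Set.inter_assoc, Set.inter_comm (X ⁻¹' B), ← hρver B hB,
      setIntegral_ite_one_zero_eq_measureReal hAs]
  have hG : Measurable fun x => ENNReal.ofReal (γ (true, d, x) ^ 2) := by fun_prop
  have hcut :
      ∫⁻ ω in {ω | S ω = true}, ENNReal.ofReal (γ (true, d, X ω) ^ 2) ∂μ.restrict {ω | D ω = d}
        ≤ ∫⁻ ω, ENNReal.ofReal (γ (S ω, D ω, X ω) ^ 2) ∂μ := by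
    rw [Measure.restrict_restrict hAs]
    calc _ = ∫⁻ ω in {ω | S ω = true} ∩ {ω | D ω = d}, ENNReal.ofReal (γ (S ω, D ω, X ω) ^ 2) ∂μ :=
          setLIntegral_congr_fun (hAs.inter hAd) fun ω (hω : S ω = true ∧ D ω = d) => by
            simp only [hω.1, hω.2]
      _ ≤ _ := setLIntegral_le_lintegral _ _
  have hsq := (ofReal_sq_mul_lintegral_le_of_isCondProbVersion hX hπ hρ hε.le hπε hρε hπA hρA
    hG).trans hcut
  rw [← ofReal_integral_eq_lintegral_ofReal hγ2' (ae_of_all _ fun _ => sq_nonneg _),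
    ← ofReal_integral_eq_lintegral_ofReal hγ2 (ae_of_all _ fun _ => sq_nonneg _),
    ← ENNReal.ofReal_pow hε.le, ← ENNReal.ofReal_mul (by positivity),
    ENNReal.ofReal_le_ofReal_iff (integral_nonneg fun _ => sq_nonneg _)] at hsq
  rw [inv_pow, inv_mul_eq_div, le_div_iff₀ (by positivity), mul_comm]
  exact hsq
end

section
/- Dynamic (sequential) identification: suppose Y^{(d)} ⊥ D | X and Y^{(d)} ⊥ S | (D, X, M), and Y = Y^{(d)} on {D = d}. Define γ₀(1,d,x,m) = E[Y | S=1, D=d, X=x, M=m]. Then E[Y^{(d)} | X = x] = ∫ γ₀(1,d,x,m) dP(m | D=d, X=x), and hence E[Y^{(d)}] = ∫∫ γ₀(1,d,x,m) dP(m | d, x) dP(x). -/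
open MeasureTheory ProbabilityTheory

/-!
Because `Y⁽ᵈ⁾ ⊥ S | (D, X, M)`, for `A ∈ σ(D, X, M)` the integrals of `Y⁽ᵈ⁾` and of
`E[Y⁽ᵈ⁾ | D, X, M]` over `A ∩ {S = 1}` agree. On `{D = d}` the former is the integral of `Y`,
hence of `γ₀(X, M)`; as `P(S = 1 | D, X, M) > 0`, integrals over the sets `A ∩ {S = 1}` determine a
`σ(D, X, M)`-measurable function, so `E[Y⁽ᵈ⁾ | D, X, M] = γ₀(X, M)` on `{D = d}`. The same
argument one level down, with `Y⁽ᵈ⁾ ⊥ D | X` and `P(D = d | X) > 0`, identifies `E[Y⁽ᵈ⁾ | X]`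
with `ω₀(X)`: by the tower property, on `{D = d} ∩ {X ∈ B}` the integral of `Y⁽ᵈ⁾` is that of
`γ₀(X, M)`, which is that of `ω₀(X)`.
-/

section

variable {Ω : Type*} {m m₀ : MeasurableSpace Ω} {μ : Measure Ω}

lemma ae_norm_condExp_indicator_le_one (t : Set Ω) : ∀ᵐ ω ∂μ, ‖(μ⟦t | m⟧) ω‖ ≤ 1 :=
  ae_bdd_norm_condExp_of_ae_bdd_norm <| ae_of_all _ fun ω => by
    by_cases hω : ω ∈ t <;> simp [hω]

lemma mul_indicator_one_eq_indicator (f : Ω → ℝ) (s : Set Ω) :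
    f * s.indicator (fun _ => 1) = s.indicator f := by
  ext ω; by_cases hω : ω ∈ s <;> simp [hω]

lemma setIntegral_inter_eq_setIntegral_mul_condExp [IsFiniteMeasure μ] (hm : m ≤ m₀)
    {ψ : Ω → ℝ} (hψm : StronglyMeasurable[m] ψ) (hψ : Integrable ψ μ)
    {A t : Set Ω} (hA : MeasurableSet[m] A) (ht : MeasurableSet t) :
    ∫ ω in A ∩ t, ψ ω ∂μ = ∫ ω in A, ψ ω * (μ⟦t | m⟧) ω ∂μ := by
  have hψt : Integrable (ψ * t.indicator fun _ => 1) μ := by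
    rw [mul_indicator_one_eq_indicator]; exact hψ.indicator ht
  calc ∫ ω in A ∩ t, ψ ω ∂μ = ∫ ω in A, (ψ * t.indicator fun _ => (1 : ℝ)) ω ∂μ := by
        rw [mul_indicator_one_eq_indicator, setIntegral_indicator ht]
    _ = ∫ ω in A, μ[ψ * t.indicator fun _ => 1 | m] ω ∂μ :=
        (setIntegral_condExp hm hψt hA).symm
    _ = ∫ ω in A, ψ ω * (μ⟦t | m⟧) ω ∂μ :=
        integral_congr_ae <| ae_restrict_of_ae <|
          condExp_mul_of_stronglyMeasurable_left hψm hψt ((integrable_const 1).indicator ht)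

lemma ae_eq_of_forall_setIntegral_inter_eq [IsFiniteMeasure μ] (hm : m ≤ m₀)
    {t : Set Ω} (ht : MeasurableSet t) (hpos : ∀ᵐ ω ∂μ, 0 < (μ⟦t | m⟧) ω) {φ₁ φ₂ : Ω → ℝ}
    (hφ₁m : StronglyMeasurable[m] φ₁) (hφ₂m : StronglyMeasurable[m] φ₂)
    (hφ₁ : Integrable φ₁ μ) (hφ₂ : Integrable φ₂ μ)
    (heq : ∀ A, MeasurableSet[m] A → ∫ ω in A ∩ t, φ₁ ω ∂μ = ∫ ω in A ∩ t, φ₂ ω ∂μ) :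
    φ₁ =ᵐ[μ] φ₂ := by
  have hint {φ : Ω → ℝ} (hφ : Integrable φ μ) : Integrable (fun ω => φ ω * (μ⟦t | m⟧) ω) μ :=
    hφ.mul_bdd integrable_condExp.aestronglyMeasurable (ae_norm_condExp_indicator_le_one t)
  have hweighted : (fun ω => φ₁ ω * (μ⟦t | m⟧) ω) =ᵐ[μ] fun ω => φ₂ ω * (μ⟦t | m⟧) ω :=
    ae_eq_of_forall_setIntegral_eq_of_sigmaFinite' hm
      (fun _ _ _ => (hint hφ₁).integrableOn) (fun _ _ _ => (hint hφ₂).integrableOn)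
      (fun A hA _ => by
        rw [← setIntegral_inter_eq_setIntegral_mul_condExp hm hφ₁m hφ₁ hA ht,
          ← setIntegral_inter_eq_setIntegral_mul_condExp hm hφ₂m hφ₂ hA ht, heq A hA])
      (hφ₁m.mul stronglyMeasurable_condExp).aestronglyMeasurable
      (hφ₂m.mul stronglyMeasurable_condExp).aestronglyMeasurable
  filter_upwards [hweighted, hpos] with ω h hω using mul_right_cancel₀ hω.ne' h

lemma integral_mul_eq_of_forall_setIntegral_eq (hm : m ≤ m₀) [SigmaFinite (μ.trim hm)]
    {f u v : Ω → ℝ} (hfm : StronglyMeasurable[m] f) (hu : Integrable u μ) (hv : Integrable v μ)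
    (hfu : Integrable (f * u) μ) (hfv : Integrable (f * v) μ)
    (huv : ∀ s, MeasurableSet[m] s → ∫ ω in s, u ω ∂μ = ∫ ω in s, v ω ∂μ) :
    ∫ ω, (f * u) ω ∂μ = ∫ ω, (f * v) ω ∂μ := by
  have hcond : μ[u | m] =ᵐ[μ] μ[v | m] :=
    ae_eq_condExp_of_forall_setIntegral_eq hm hv (fun _ _ _ => integrable_condExp.integrableOn)
      (fun s hs _ => by rw [setIntegral_condExp hm hu hs, huv s hs])
      stronglyMeasurable_condExp.aestronglyMeasurable
  calc ∫ ω, (f * u) ω ∂μ = ∫ ω, μ[f * u | m] ω ∂μ := (integral_condExp hm).symm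
    _ = ∫ ω, (f * μ[u | m]) ω ∂μ :=
        integral_congr_ae (condExp_mul_of_stronglyMeasurable_left hfm hfu hu)
    _ = ∫ ω, (f * μ[v | m]) ω ∂μ := integral_congr_ae (hcond.mul_left (f₃ := f))
    _ = ∫ ω, μ[f * v | m] ω ∂μ :=
        integral_congr_ae (condExp_mul_of_stronglyMeasurable_left hfm hfv hv).symm
    _ = ∫ ω, (f * v) ω ∂μ := integral_condExp hm

lemma ProbabilityTheory.CondIndepFun.setIntegral_inter_preimage_eq_setIntegral_condExp
    [StandardBorelSpace Ω] [IsFiniteMeasure μ] {β : Type*} [MeasurableSpace β] {hm : m ≤ m₀}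
    {f : Ω → ℝ} {g : Ω → β}
    (hfg : CondIndepFun m hm f g μ) (hf : Measurable f) (hg : Measurable g)
    (hfi : Integrable f μ) {A : Set Ω} {t : Set β} (hA : MeasurableSet[m] A)
    (ht : MeasurableSet t) :
    ∫ ω in A ∩ g ⁻¹' t, f ω ∂μ = ∫ ω in A ∩ g ⁻¹' t, (μ[f | m]) ω ∂μ := by
  set T := g ⁻¹' t
  have hT : MeasurableSet T := hg ht
  have hA₀ : MeasurableSet A := hm A hA
  have hprod := (condIndepFun_iff_condExp_inter_preimage_eq_mul hf hg).mp hfg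
  have hfT : Integrable (fun ω => f ω * (μ⟦T | m⟧) ω) μ :=
    hfi.mul_bdd integrable_condExp.aestronglyMeasurable (ae_norm_condExp_indicator_le_one T)
  -- Conditional independence makes the weights `1_{A ∩ T}` and `1_A P(T | m)` agree on `σ(f)`,
  -- so they integrate the `σ(f)`-measurable `f` alike.
  have hσf : ∀ s, MeasurableSet[MeasurableSpace.comap f inferInstance] s →
      ∫ ω in s, (A ∩ T).indicator (fun _ => (1 : ℝ)) ω ∂μ
        = ∫ ω in s, A.indicator (μ⟦T | m⟧) ω ∂μ := by
    rintro _ ⟨s, hs, rfl⟩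
    have hfs : MeasurableSet (f ⁻¹' s) := hf hs
    calc ∫ ω in f ⁻¹' s, (A ∩ T).indicator (fun _ => (1 : ℝ)) ω ∂μ
        = ∫ ω in A, (f ⁻¹' s ∩ T).indicator (fun _ => (1 : ℝ)) ω ∂μ := by
          rw [setIntegral_indicator (hA₀.inter hT), setIntegral_indicator (hfs.inter hT),
            Set.inter_left_comm]
      _ = ∫ ω in A, (μ⟦f ⁻¹' s ∩ T | m⟧) ω ∂μ :=
          (setIntegral_condExp hm ((integrable_const 1).indicator (hfs.inter hT)) hA).symm
      _ = ∫ ω in A, (μ⟦T | m⟧) ω * (μ⟦f ⁻¹' s | m⟧) ω ∂μ :=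
          integral_congr_ae <| ae_restrict_of_ae <| (hprod s t hs ht).trans <|
            ae_of_all _ fun ω => mul_comm _ _
      _ = ∫ ω in A ∩ f ⁻¹' s, (μ⟦T | m⟧) ω ∂μ :=
          (setIntegral_inter_eq_setIntegral_mul_condExp hm stronglyMeasurable_condExp
            integrable_condExp hA hfs).symm
      _ = ∫ ω in f ⁻¹' s, A.indicator (μ⟦T | m⟧) ω ∂μ := by
          rw [setIntegral_indicator hA₀, Set.inter_comm]
  have hfA : f * A.indicator (μ⟦T | m⟧) = A.indicator fun ω => f ω * (μ⟦T | m⟧) ω :=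
    funext fun ω => (Set.indicator_mul_right A f _).symm
  calc ∫ ω in A ∩ T, f ω ∂μ
      = ∫ ω, (f * (A ∩ T).indicator fun _ => (1 : ℝ)) ω ∂μ := by
        rw [mul_indicator_one_eq_indicator, integral_indicator (hA₀.inter hT)]
    _ = ∫ ω, (f * A.indicator (μ⟦T | m⟧)) ω ∂μ := by
        refine integral_mul_eq_of_forall_setIntegral_eq hf.comap_le
          (Measurable.of_comap_le le_rfl).stronglyMeasurable
          ((integrable_const 1).indicator (hA₀.inter hT)) (integrable_condExp.indicator hA₀)
          ?_ ?_ hσf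
        · rw [mul_indicator_one_eq_indicator]; exact hfi.indicator (hA₀.inter hT)
        · rw [hfA]; exact hfT.indicator hA₀
    _ = ∫ ω in A, f ω * (μ⟦T | m⟧) ω ∂μ := by
        rw [hfA, integral_indicator hA₀]
    _ = ∫ ω in A, (μ[f | m]) ω * (μ⟦T | m⟧) ω ∂μ := by
        rw [← setIntegral_condExp hm hfT hA]
        exact integral_congr_ae <| ae_restrict_of_ae <|
          condExp_mul_of_stronglyMeasurable_right stronglyMeasurable_condExp hfT hfi
    _ = ∫ ω in A ∩ T, (μ[f | m]) ω ∂μ :=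
        (setIntegral_inter_eq_setIntegral_mul_condExp hm stronglyMeasurable_condExp
          integrable_condExp hA hT).symm

lemma ProbabilityTheory.CondIndepFun.condExp_ae_eq_on_of_setIntegral_eq
    [StandardBorelSpace Ω] [IsFiniteMeasure μ] {β : Type*} [MeasurableSpace β] {hm : m ≤ m₀}
    {f : Ω → ℝ} {g : Ω → β}
    (hfg : CondIndepFun m hm f g μ) (hf : Measurable f) (hg : Measurable g)
    (hfi : Integrable f μ) {t : Set β} (ht : MeasurableSet t)
    (hpos : ∀ᵐ ω ∂μ, 0 < (μ⟦g ⁻¹' t | m⟧) ω) {E : Set Ω} (hE : MeasurableSet[m] E)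
    {γ : Ω → ℝ} (hγm : StronglyMeasurable[m] γ) (hγ : Integrable γ μ)
    (heq : ∀ A, MeasurableSet[m] A →
      ∫ ω in A ∩ E ∩ g ⁻¹' t, f ω ∂μ = ∫ ω in A ∩ E ∩ g ⁻¹' t, γ ω ∂μ) :
    ∀ᵐ ω ∂μ, ω ∈ E → (μ[f | m]) ω = γ ω := by
  have hE₀ : MeasurableSet E := hm E hE
  have hind : E.indicator (μ[f | m]) =ᵐ[μ] E.indicator γ := by
    refine ae_eq_of_forall_setIntegral_inter_eq hm (hg ht) hpos
      (stronglyMeasurable_condExp.indicator hE) (hγm.indicator hE)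
      (integrable_condExp.indicator hE₀) (hγ.indicator hE₀) fun A hA => ?_
    have hAE : MeasurableSet[m] (A ∩ E) := hA.inter hE
    rw [setIntegral_indicator hE₀, setIntegral_indicator hE₀, Set.inter_right_comm,
      ← hfg.setIntegral_inter_preimage_eq_setIntegral_condExp hf hg hfi hAE ht, heq A hA]
  filter_upwards [hind] with ω hω hωE
  simpa [Set.indicator_of_mem hωE] using hω

end

lemma condExp_ae_eq_regression_on_of_condIndepFun {Ω 𝒟 𝒲 : Type*} [MeasurableSpace Ω]
    [StandardBorelSpace Ω] [MeasurableSpace 𝒟] [MeasurableSingletonClass 𝒟] [MeasurableSpace 𝒲]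
    {μ : Measure Ω} [IsFiniteMeasure μ] {Y Yd : Ω → ℝ} {S : Ω → Bool} {D : Ω → 𝒟} {W : Ω → 𝒲}
    (hYd : Measurable Yd) (hS : Measurable S) (hD : Measurable D) (hW : Measurable W) {d : 𝒟}
    (hYdInt : Integrable Yd μ)
    (hCI : CondIndepFun (MeasurableSpace.comap (fun ω => (D ω, W ω)) inferInstance)
      (hD.prodMk hW).comap_le Yd S μ)
    (hni : ∀ ω, D ω = d → Y ω = Yd ω)
    (hpos : ∀ᵐ ω ∂μ, 0 < (μ⟦{ω | S ω = true} |
      MeasurableSpace.comap (fun ω => (D ω, W ω)) inferInstance⟧) ω)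
    {γ₀ : 𝒲 → ℝ} (hγ₀ : Measurable γ₀) (hγ₀Int : Integrable (fun ω => γ₀ (W ω)) μ)
    (hγver : ∀ B, MeasurableSet B →
      ∫ ω in {ω | S ω = true ∧ D ω = d} ∩ W ⁻¹' B, Y ω ∂μ
        = ∫ ω in {ω | S ω = true ∧ D ω = d} ∩ W ⁻¹' B, γ₀ (W ω) ∂μ) :
    ∀ᵐ ω ∂μ, ω ∈ {ω | D ω = d} →
      (μ[Yd | MeasurableSpace.comap (fun ω => (D ω, W ω)) inferInstance]) ω = γ₀ (W ω) := by
  refine hCI.condExp_ae_eq_on_of_setIntegral_eq hYd hS hYdInt (measurableSet_singleton true) hpos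
    ⟨{d} ×ˢ Set.univ, (measurableSet_singleton d).prod .univ, by ext; simp⟩
    (hγ₀.comp (measurable_snd.comp (comap_measurable _))).stronglyMeasurable hγ₀Int ?_
  rintro _ ⟨V, hV, rfl⟩
  have hset : (fun ω => (D ω, W ω)) ⁻¹' V ∩ {ω | D ω = d} ∩ S ⁻¹' {true}
      = {ω | S ω = true ∧ D ω = d} ∩ W ⁻¹' (Prod.mk d ⁻¹' V) := by
    ext ω
    simp only [Set.mem_inter_iff, Set.mem_preimage, Set.mem_ofPred_eq, Set.mem_singleton_iff]
    constructor
    · rintro ⟨⟨hV, rfl⟩, hS⟩; exact ⟨⟨hS, rfl⟩, hV⟩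
    · rintro ⟨⟨hS, rfl⟩, hV⟩; exact ⟨⟨hV, rfl⟩, hS⟩
  rw [hset, ← hγver _ (measurable_prodMk_left hV)]
  exact setIntegral_congr_fun ((hS (measurableSet_singleton true)).inter
    (hD (measurableSet_singleton d)) |>.inter (hW (measurable_prodMk_left hV)))
    fun ω hω => (hni ω hω.1.2).symm

theorem stmt_7_general {Ω 𝒟 𝒳 ℳ : Type*} [MeasurableSpace Ω] [StandardBorelSpace Ω]
    [MeasurableSpace 𝒟] [m𝒳 : MeasurableSpace 𝒳] [MeasurableSpace ℳ]
    [MeasurableSingletonClass 𝒟]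
    (μ : Measure Ω) [IsProbabilityMeasure μ]
    (Y Yd : Ω → ℝ) (S : Ω → Bool) (D : Ω → 𝒟) (X : Ω → 𝒳) (M : Ω → ℳ)
    (hYd : Measurable Yd) (hS : Measurable S) (hD : Measurable D)
    (hX : Measurable X) (hM : Measurable M) (d : 𝒟)
    (hYdInt : Integrable Yd μ)
    -- conditional exchangeability: `Y⁽ᵈ⁾ ⊥ D | X`
    (hCI1 : CondIndepFun (MeasurableSpace.comap X m𝒳)
      (MeasurableSpace.comap_le_iff_le_map.mpr hX.le_map) Yd D μ)
    -- conditional exchangeability: `Y⁽ᵈ⁾ ⊥ S | (D, X, M)`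
    (hCI2 : CondIndepFun
      (MeasurableSpace.comap (fun ω => (D ω, X ω, M ω)) inferInstance)
      (MeasurableSpace.comap_le_iff_le_map.mpr (hD.prodMk (hX.prodMk hM)).le_map) Yd S μ)
    -- no interference
    (hni : ∀ ω, D ω = d → Y ω = Yd ω)
    -- overlap: `P(D = d | X) > 0` and `P(S = 1 | D, X, M) > 0` almost surely
    (hov1 : ∀ᵐ ω ∂μ,
      0 < (μ[Set.indicator {ω' | D ω' = d} (fun _ => (1 : ℝ)) |
        MeasurableSpace.comap X m𝒳]) ω)
    (hov2 : ∀ᵐ ω ∂μ,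
      0 < (μ[Set.indicator {ω' | S ω' = true} (fun _ => (1 : ℝ)) |
        MeasurableSpace.comap (fun ω' => (D ω', X ω', M ω')) inferInstance]) ω)
    -- `γ₀` is a version of `(x,m) ↦ E[Y | S = 1, D = d, X = x, M = m]`
    (γ₀ : 𝒳 × ℳ → ℝ) (hγ₀ : Measurable γ₀)
    (hγ₀Int : Integrable (fun ω => γ₀ (X ω, M ω)) μ)
    (hγver : ∀ B : Set (𝒳 × ℳ), MeasurableSet B →
      ∫ ω in {ω | S ω = true ∧ D ω = d} ∩ (fun ω => (X ω, M ω)) ⁻¹' B, Y ω ∂μ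
        = ∫ ω in {ω | S ω = true ∧ D ω = d} ∩ (fun ω => (X ω, M ω)) ⁻¹' B,
            γ₀ (X ω, M ω) ∂μ)
    -- `ω₀` is a version of `x ↦ ∫ γ₀(1,d,x,m) dP(m | D = d, X = x)`
    (ω₀ : 𝒳 → ℝ) (hω₀ : Measurable ω₀)
    (hω₀Int : Integrable (fun ω => ω₀ (X ω)) μ)
    (hωver : ∀ B : Set 𝒳, MeasurableSet B →
      ∫ ω in {ω | D ω = d} ∩ X ⁻¹' B, γ₀ (X ω, M ω) ∂μ
        = ∫ ω in {ω | D ω = d} ∩ X ⁻¹' B, ω₀ (X ω) ∂μ) :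
    (fun ω => ω₀ (X ω)) =ᵐ[μ] μ[Yd | MeasurableSpace.comap X m𝒳]
      ∧ ∫ ω, Yd ω ∂μ = ∫ ω, ω₀ (X ω) ∂μ := by
  have hinner := condExp_ae_eq_regression_on_of_condIndepFun hYd hS hD (hX.prodMk hM) hYdInt
    hCI2 hni hov2 hγ₀ hγ₀Int hγver
  have houter : μ[Yd | MeasurableSpace.comap X m𝒳] =ᵐ[μ] fun ω => ω₀ (X ω) := by
    refine (hCI1.condExp_ae_eq_on_of_setIntegral_eq hYd hD hYdInt (measurableSet_singleton d)
      hov1 .univ (hω₀.comp (comap_measurable X)).stronglyMeasurable hω₀Int ?_).mono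
      fun ω h => h trivial
    rintro _ ⟨B, hB, rfl⟩
    have hA : MeasurableSet[MeasurableSpace.comap (fun ω => (D ω, X ω, M ω)) inferInstance]
        (X ⁻¹' B ∩ D ⁻¹' {d}) :=
      ⟨{d} ×ˢ B ×ˢ Set.univ, (measurableSet_singleton d).prod (hB.prod .univ), by
        ext; simp [and_comm]⟩
    rw [Set.inter_univ]
    calc ∫ ω in X ⁻¹' B ∩ D ⁻¹' {d}, Yd ω ∂μ
        = ∫ ω in X ⁻¹' B ∩ D ⁻¹' {d},
            (μ[Yd | MeasurableSpace.comap (fun ω => (D ω, X ω, M ω)) inferInstance]) ω ∂μ :=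
          (setIntegral_condExp (hD.prodMk (hX.prodMk hM)).comap_le hYdInt hA).symm
      _ = ∫ ω in X ⁻¹' B ∩ D ⁻¹' {d}, γ₀ (X ω, M ω) ∂μ :=
          setIntegral_congr_ae ((hX hB).inter (hD (measurableSet_singleton d)))
            (hinner.mono fun ω h hω => h hω.2)
      _ = ∫ ω in X ⁻¹' B ∩ D ⁻¹' {d}, ω₀ (X ω) ∂μ := by
          rw [Set.inter_comm]; exact hωver B hB
  refine ⟨houter.symm, ?_⟩
  rw [← integral_condExp hX.comap_le]
  exact integral_congr_ae houter

/-- Dynamic (sequential) identification: under no interference, `Y⁽ᵈ⁾ ⊥ D | X`,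
`Y⁽ᵈ⁾ ⊥ S | (D, X, M)`, and overlap, with `γ₀` a version of
`(x,m) ↦ E[Y | S=1, D=d, X=x, M=m]` and `ω₀` a version of
`x ↦ ∫ γ₀(1,d,x,m) dP(m | D=d, X=x)` (i.e. of `E[γ₀(1,d,X,M) | D=d, X]`), one has
`E[Y⁽ᵈ⁾ | X] = ω₀(X)` a.e., and hence `E[Y⁽ᵈ⁾] = E[ω₀(X)]`. -/
theorem stmt_7 {Ω 𝒟 𝒳 ℳ : Type*} [MeasurableSpace Ω] [StandardBorelSpace Ω] [Nonempty Ω]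
    [MeasurableSpace 𝒟] [m𝒳 : MeasurableSpace 𝒳] [MeasurableSpace ℳ]
    [MeasurableSingletonClass 𝒟]
    (μ : Measure Ω) [IsProbabilityMeasure μ]
    (Y Yd : Ω → ℝ) (S : Ω → Bool) (D : Ω → 𝒟) (X : Ω → 𝒳) (M : Ω → ℳ)
    (hY : Measurable Y) (hYd : Measurable Yd) (hS : Measurable S) (hD : Measurable D)
    (hX : Measurable X) (hM : Measurable M) (d : 𝒟)
    (hYdInt : Integrable Yd μ)
    -- conditional exchangeability: `Y⁽ᵈ⁾ ⊥ D | X`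
    (hCI1 : CondIndepFun (MeasurableSpace.comap X m𝒳)
      (MeasurableSpace.comap_le_iff_le_map.mpr hX.le_map) Yd D μ)
    -- conditional exchangeability: `Y⁽ᵈ⁾ ⊥ S | (D, X, M)`
    (hCI2 : CondIndepFun
      (MeasurableSpace.comap (fun ω => (D ω, X ω, M ω)) inferInstance)
      (MeasurableSpace.comap_le_iff_le_map.mpr (hD.prodMk (hX.prodMk hM)).le_map) Yd S μ)
    -- no interference
    (hni : ∀ ω, D ω = d → Y ω = Yd ω)
    -- overlap: `P(D = d | X) > 0` and `P(S = 1 | D, X, M) > 0` almost surely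
    (hov1 : ∀ᵐ ω ∂μ,
      0 < (μ[Set.indicator {ω' | D ω' = d} (fun _ => (1 : ℝ)) |
        MeasurableSpace.comap X m𝒳]) ω)
    (hov2 : ∀ᵐ ω ∂μ,
      0 < (μ[Set.indicator {ω' | S ω' = true} (fun _ => (1 : ℝ)) |
        MeasurableSpace.comap (fun ω' => (D ω', X ω', M ω')) inferInstance]) ω)
    -- `γ₀` is a version of `(x,m) ↦ E[Y | S = 1, D = d, X = x, M = m]`
    (γ₀ : 𝒳 × ℳ → ℝ) (hγ₀ : Measurable γ₀)
    (hγ₀Int : Integrable (fun ω => γ₀ (X ω, M ω)) μ)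
    (hγver : ∀ B : Set (𝒳 × ℳ), MeasurableSet B →
      ∫ ω in {ω | S ω = true ∧ D ω = d} ∩ (fun ω => (X ω, M ω)) ⁻¹' B, Y ω ∂μ
        = ∫ ω in {ω | S ω = true ∧ D ω = d} ∩ (fun ω => (X ω, M ω)) ⁻¹' B,
            γ₀ (X ω, M ω) ∂μ)
    -- `ω₀` is a version of `x ↦ ∫ γ₀(1,d,x,m) dP(m | D = d, X = x)`
    (ω₀ : 𝒳 → ℝ) (hω₀ : Measurable ω₀)
    (hω₀Int : Integrable (fun ω => ω₀ (X ω)) μ)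
    (hωver : ∀ B : Set 𝒳, MeasurableSet B →
      ∫ ω in {ω | D ω = d} ∩ X ⁻¹' B, γ₀ (X ω, M ω) ∂μ
        = ∫ ω in {ω | D ω = d} ∩ X ⁻¹' B, ω₀ (X ω) ∂μ) :
    (fun ω => ω₀ (X ω)) =ᵐ[μ] μ[Yd | MeasurableSpace.comap X m𝒳]
      ∧ ∫ ω, Yd ω ∂μ = ∫ ω, ω₀ (X ω) ∂μ :=
  stmt_7_general (m𝒳 := m𝒳) μ Y Yd S D X M hYd hS hD hX hM d hYdInt hCI1 hCI2 hni hov1 hov2 γ₀ hγ₀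
    hγ₀Int hγver ω₀ hω₀ hω₀Int hωver
end

section
/- Riesz representer identity for the ATT numerator: let S ∈ {0,1}, D discrete with values d, d′, X covariates, and suppose P(S=1|D=d′,X) ≥ ε and P(D=d′|X) ≥ ε almost surely. Then for any bounded measurable γ, E[ γ(1,d′,X) · 1{D=d} ] = E[ (S · 1{D=d′} · P(D=d|X)) / (P(S=1|D=d′,X) · P(D=d′|X)) · γ(S,D,X) ]. -/
/-!
Conditioning on `X` turns `1{D = d}` into `πd(X)`, so the left side is `E[h(X)]` with
`h = γ(1, d', ·) πd`. Inverse probability weighting rewrites `E[h(X)]`: conditioning on `X`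
replaces `πd'(X)` by `1{D = d'}`, and then, on `{D = d'}`, replaces `ρ(X)` by `S`; on
`{S = 1, D = d'}` one has `γ(S, D, X) = γ(1, d', X)`. Each step is the pull-out property
`E[h(X) f] = E[h(X) E[f | X]]`; it applies because versions of conditional probabilities lie in
`[0, 1]` a.e., so every weight `h(X)` stays bounded.
-/

open MeasureTheory Set

section

variable {Ω : Type*} [MeasurableSpace Ω] {μ : Measure Ω}

theorem measure_eq_zero_of_setIntegral_le_of_lt [IsFiniteMeasure μ] {s : Set Ω} {φ : Ω → ℝ}
    {b : ℝ} (hs : MeasurableSet s) (hφ : IntegrableOn φ s μ) (hlt : ∀ ω ∈ s, b < φ ω)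
    (hle : ∫ ω in s, φ ω ∂μ ≤ ∫ _ in s, b ∂μ) : μ s = 0 := by
  by_contra hμs
  have hb : IntegrableOn (fun _ => b) s μ := integrableOn_const (measure_ne_top μ s)
  have hsupp : Function.support (fun ω => φ ω - b) ∩ s = s :=
    inter_eq_right.2 fun ω hω => sub_ne_zero.2 (hlt ω hω).ne'
  have hpos : 0 < ∫ ω in s, (φ ω - b) ∂μ := by
    rw [setIntegral_pos_iff_support_of_nonneg_ae
      (ae_restrict_of_forall_mem hs fun ω hω => (sub_pos.2 (hlt ω hω)).le) (hφ.sub hb), hsupp]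
    exact pos_iff_ne_zero.2 hμs
  rw [integral_sub hφ hb] at hpos
  linarith

theorem integral_mul_boole_eq_setIntegral {p : Ω → Prop} [DecidablePred p]
    (hp : MeasurableSet {ω | p ω}) (φ : Ω → ℝ) :
    ∫ ω, φ ω * (if p ω then 1 else 0) ∂μ = ∫ ω in {ω | p ω}, φ ω ∂μ := by
  rw [← integral_indicator hp]
  congr with ω
  simp [indicator_apply]

end

theorem abs_boole_le_one (p : Prop) [Decidable p] : |(if p then (1 : ℝ) else 0)| ≤ 1 := by
  split_ifs <;> simp

theorem abs_div_le_div_of_le {a q C e : ℝ} (ha : |a| ≤ C) (he : 0 < e) (hq : e ≤ q) :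
    |a / q| ≤ C / e := by
  rw [abs_div, abs_of_pos (he.trans_le hq)]
  exact div_le_div₀ ((abs_nonneg a).trans ha) ha he hq

/-- `g ∘ X` is a version of `E[f | X]`. Integrability of `g ∘ X` is not required, so that
`∫ ω in X ⁻¹' B, g (X ω) ∂μ` may be a junk value; it is recovered below from bounds on `f`. -/
def IsCondExpVersion {Ω 𝒳 : Type*} [MeasurableSpace Ω] [MeasurableSpace 𝒳] (μ : Measure Ω)
    (X : Ω → 𝒳) (f : Ω → ℝ) (g : 𝒳 → ℝ) : Prop :=
  ∀ B : Set 𝒳, MeasurableSet B → ∫ ω in X ⁻¹' B, f ω ∂μ = ∫ ω in X ⁻¹' B, g (X ω) ∂μ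

namespace IsCondExpVersion

variable {Ω 𝒳 : Type*} [MeasurableSpace Ω] [MeasurableSpace 𝒳] {μ : Measure Ω} {X : Ω → 𝒳}
  {f : Ω → ℝ} {g : 𝒳 → ℝ}

theorem restrict_iff (hX : Measurable X) {s : Set Ω} :
    IsCondExpVersion (μ.restrict s) X f g ↔ ∀ B : Set 𝒳, MeasurableSet B →
      ∫ ω in s ∩ X ⁻¹' B, f ω ∂μ = ∫ ω in s ∩ X ⁻¹' B, g (X ω) ∂μ := by
  refine forall₂_congr fun B hB => ?_
  rw [Measure.restrict_restrict (hX hB), inter_comm]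

theorem neg (hv : IsCondExpVersion μ X f g) : IsCondExpVersion μ X (-f) (-g) := fun B hB => by
  simp only [Pi.neg_apply, integral_neg, hv B hB]

theorem ae_comp_le [IsFiniteMeasure μ] (hv : IsCondExpVersion μ X f g) (hX : Measurable X)
    (hf : Integrable f μ) (hg : Measurable g) {b : ℝ} (hfb : ∀ ω, f ω ≤ b) :
    ∀ᵐ ω ∂μ, g (X ω) ≤ b := by
  -- `g ∘ X` need not be integrable, so it is tested on the slices where `|g| ≤ n`.
  let A : ℕ → Set 𝒳 := fun n => {x | b < g x ∧ |g x| ≤ n}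
  have hA : ∀ n, MeasurableSet (A n) := fun n =>
    (measurableSet_lt measurable_const hg).inter (measurableSet_le hg.abs measurable_const)
  have hnull : ∀ n, μ (X ⁻¹' A n) = 0 := fun n => by
    have hs := hX (hA n)
    refine measure_eq_zero_of_setIntegral_le_of_lt hs ?_ (fun ω hω => hω.1) ?_
    · exact IntegrableOn.of_bound (measure_lt_top μ _) (hg.comp hX).aestronglyMeasurable n
        (ae_restrict_of_forall_mem hs fun ω hω => hω.2)
    · rw [← hv _ (hA n)]
      exact setIntegral_mono_on hf.integrableOn
        (integrableOn_const (measure_ne_top μ _)) hs fun ω _ => hfb ω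
  refine measure_mono_null (fun ω hω => ?_) (measure_iUnion_null hnull)
  obtain ⟨n, hn⟩ := exists_nat_ge |g (X ω)|
  exact mem_iUnion.2 ⟨n, not_le.1 hω, hn⟩

theorem ae_abs_comp_le [IsFiniteMeasure μ] (hv : IsCondExpVersion μ X f g) (hX : Measurable X)
    (hf : Measurable f) {c : ℝ} (hfc : ∀ ω, |f ω| ≤ c) (hg : Measurable g) :
    ∀ᵐ ω ∂μ, |g (X ω)| ≤ c := by
  have hf : Integrable f μ := .of_bound hf.aestronglyMeasurable c (ae_of_all _ hfc)
  filter_upwards [hv.ae_comp_le hX hf hg fun ω => (abs_le.1 (hfc ω)).2,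
    hv.neg.ae_comp_le hX hf.neg hg.neg fun ω => neg_le.1 (abs_le.1 (hfc ω)).1] with ω hle hge
  exact abs_le.2 ⟨neg_le.1 hge, hle⟩

theorem ae_eq_condExp [IsFiniteMeasure μ] (hv : IsCondExpVersion μ X f g) (hX : Measurable X)
    (hf : Integrable f μ) (hg : Measurable g) (hgi : Integrable (fun ω => g (X ω)) μ) :
    (fun ω => g (X ω)) =ᵐ[μ] μ[f | MeasurableSpace.comap X ‹_›] := by
  refine ae_eq_condExp_of_forall_setIntegral_eq hX.comap_le hf (fun _ _ _ => hgi.integrableOn)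
    ?_ (hg.comp (comap_measurable X)).aestronglyMeasurable
  rintro _ ⟨B, hB, rfl⟩ _
  exact (hv B hB).symm

theorem integral_comp_mul [IsFiniteMeasure μ] (hv : IsCondExpVersion μ X f g)
    (hX : Measurable X) (hf : Measurable f) {c : ℝ} (hfc : ∀ ω, |f ω| ≤ c) (hg : Measurable g)
    {h : 𝒳 → ℝ} (hh : Measurable h) {C : ℝ} (hhC : ∀ᵐ ω ∂μ, |h (X ω)| ≤ C) :
    ∫ ω, h (X ω) * f ω ∂μ = ∫ ω, h (X ω) * g (X ω) ∂μ := by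
  have hfi : Integrable f μ := .of_bound hf.aestronglyMeasurable c (ae_of_all _ hfc)
  have hgi : Integrable (fun ω => g (X ω)) μ :=
    .of_bound (hg.comp hX).aestronglyMeasurable c (hv.ae_abs_comp_le hX hf hfc hg)
  have hhX : StronglyMeasurable[MeasurableSpace.comap X ‹_›] (fun ω => h (X ω)) :=
    (hh.comp (comap_measurable X)).stronglyMeasurable
  calc ∫ ω, h (X ω) * f ω ∂μ
      = ∫ ω, μ[(fun ω => h (X ω)) * f | MeasurableSpace.comap X ‹_›] ω ∂μ :=
        (integral_condExp hX.comap_le).symm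
    _ = ∫ ω, h (X ω) * μ[f | MeasurableSpace.comap X ‹_›] ω ∂μ :=
        integral_congr_ae (condExp_mul_of_stronglyMeasurable_left hhX
          (hfi.bdd_mul (hh.comp hX).aestronglyMeasurable hhC) hfi)
    _ = ∫ ω, h (X ω) * g (X ω) ∂μ := by
        refine integral_congr_ae ?_
        filter_upwards [hv.ae_eq_condExp hX hfi hg hgi] with ω hω
        rw [hω]

end IsCondExpVersion

theorem integral_comp_eq_integral_ipw {Ω 𝒟 𝒳 : Type*} [MeasurableSpace Ω] [MeasurableSpace 𝒟]
    [MeasurableSpace 𝒳] [MeasurableSingletonClass 𝒟] [DecidableEq 𝒟] {μ : Measure Ω}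
    [IsFiniteMeasure μ] {S : Ω → Bool} {D : Ω → 𝒟} {X : Ω → 𝒳} (hS : Measurable S)
    (hD : Measurable D) (hX : Measurable X) {d' : 𝒟} {πd' ρ : 𝒳 → ℝ} (hπd' : Measurable πd')
    (hρ : Measurable ρ) {ε : ℝ} (hε : 0 < ε) (hπε : ∀ x, ε ≤ πd' x) (hρε : ∀ x, ε ≤ ρ x)
    (hπd'v : IsCondExpVersion μ X (fun ω => if D ω = d' then 1 else 0) πd')
    (hρv : IsCondExpVersion (μ.restrict {ω | D ω = d'}) X (fun ω => if S ω then 1 else 0) ρ)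
    {h : 𝒳 → ℝ} (hh : Measurable h) {C : ℝ} (hhC : ∀ᵐ ω ∂μ, |h (X ω)| ≤ C) :
    ∫ ω, h (X ω) ∂μ = ∫ ω, h (X ω) / (ρ (X ω) * πd' (X ω)) * (if S ω then 1 else 0)
      * (if D ω = d' then 1 else 0) ∂μ := by
  have hπd'pos : ∀ x, 0 < πd' x := fun x => hε.trans_le (hπε x)
  have hρpos : ∀ x, 0 < ρ x := fun x => hε.trans_le (hρε x)
  have hDd' : MeasurableSet {ω | D ω = d'} := hD (measurableSet_singleton d')
  have hS₁ : MeasurableSet {ω | S ω = true} := hS (measurableSet_singleton true)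
  calc ∫ ω, h (X ω) ∂μ = ∫ ω, h (X ω) / πd' (X ω) * πd' (X ω) ∂μ := by
        congr with ω
        field_simp [(hπd'pos (X ω)).ne']
    _ = ∫ ω, h (X ω) / πd' (X ω) * (if D ω = d' then 1 else 0) ∂μ :=
        (hπd'v.integral_comp_mul hX (measurable_const.ite hDd' measurable_const)
          (fun _ => abs_boole_le_one _) hπd' (hh.div hπd')
          (hhC.mono fun ω hω => abs_div_le_div_of_le hω hε (hπε _))).symm
    _ = ∫ ω in {ω | D ω = d'}, h (X ω) / πd' (X ω) ∂μ :=
        integral_mul_boole_eq_setIntegral hDd' _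
    _ = ∫ ω in {ω | D ω = d'}, h (X ω) / (ρ (X ω) * πd' (X ω)) * ρ (X ω) ∂μ := by
        congr with ω
        field_simp [(hπd'pos (X ω)).ne', (hρpos (X ω)).ne']
    _ = ∫ ω in {ω | D ω = d'}, h (X ω) / (ρ (X ω) * πd' (X ω)) * (if S ω then 1 else 0) ∂μ :=
        (hρv.integral_comp_mul hX (measurable_const.ite hS₁ measurable_const)
          (fun _ => abs_boole_le_one _) hρ (hh.div (hρ.mul hπd'))
          ((ae_restrict_of_ae hhC).mono fun ω hω => abs_div_le_div_of_le hω (mul_pos hε hε)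
            (mul_le_mul (hρε _) (hπε _) hε.le (hρpos _).le))).symm
    _ = _ := (integral_mul_boole_eq_setIntegral hDd' _).symm

/-- Riesz representer identity for the ATT numerator: with `πd, πd'` versions of
`P(D=d|X)`, `P(D=d'|X)` and `ρ` a version of `P(S=1|D=d',X)`, where
`ρ, πd' ≥ ε > 0`, for any bounded measurable `γ`,
`E[γ(1,d',X) 1{D=d}] = E[ S·1{D=d'}·πd(X) / (ρ(X) πd'(X)) · γ(S,D,X) ]`. -/
theorem stmt_15 {Ω 𝒟 𝒳 : Type*} [MeasurableSpace Ω] [MeasurableSpace 𝒟] [MeasurableSpace 𝒳]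
    [MeasurableSingletonClass 𝒟] [DecidableEq 𝒟]
    (μ : Measure Ω) [IsProbabilityMeasure μ]
    (S : Ω → Bool) (D : Ω → 𝒟) (X : Ω → 𝒳)
    (hS : Measurable S) (hD : Measurable D) (hX : Measurable X) (d d' : 𝒟)
    (γ : Bool × 𝒟 × 𝒳 → ℝ) (hγ : Measurable γ) (Cγ : ℝ) (hγb : ∀ p, |γ p| ≤ Cγ)
    (πd πd' ρ : 𝒳 → ℝ) (hπd : Measurable πd) (hπd' : Measurable πd') (hρ : Measurable ρ)
    (ε : ℝ) (hε : 0 < ε) (hπε : ∀ x, ε ≤ πd' x) (hρε : ∀ x, ε ≤ ρ x)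
    -- `πd` is a version of `P(D = d | X)`:
    (hπdver : ∀ B : Set 𝒳, MeasurableSet B →
      ∫ ω in X ⁻¹' B, (if D ω = d then (1 : ℝ) else 0) ∂μ
        = ∫ ω in X ⁻¹' B, πd (X ω) ∂μ)
    -- `πd'` is a version of `P(D = d' | X)`:
    (hπd'ver : ∀ B : Set 𝒳, MeasurableSet B →
      ∫ ω in X ⁻¹' B, (if D ω = d' then (1 : ℝ) else 0) ∂μ
        = ∫ ω in X ⁻¹' B, πd' (X ω) ∂μ)
    -- `ρ` is a version of `P(S = 1 | D = d', X)`: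
    (hρver : ∀ B : Set 𝒳, MeasurableSet B →
      ∫ ω in {ω | D ω = d'} ∩ X ⁻¹' B, (if S ω then (1 : ℝ) else 0) ∂μ
        = ∫ ω in {ω | D ω = d'} ∩ X ⁻¹' B, ρ (X ω) ∂μ) :
    ∫ ω, γ (true, d', X ω) * (if D ω = d then (1 : ℝ) else 0) ∂μ
      = ∫ ω, (if S ω then (1 : ℝ) else 0) * (if D ω = d' then (1 : ℝ) else 0) * πd (X ω)
          / (ρ (X ω) * πd' (X ω)) * γ (S ω, D ω, X ω) ∂μ := by
  have hDd : MeasurableSet {ω | D ω = d} := hD (measurableSet_singleton d)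
  have hπd_le : ∀ᵐ ω ∂μ, |πd (X ω)| ≤ 1 := IsCondExpVersion.ae_abs_comp_le hπdver hX
    (measurable_const.ite hDd measurable_const) (fun _ => abs_boole_le_one _) hπd
  have hγ₁ : Measurable fun x => γ (true, d', x) := by fun_prop
  have hγπd_le : ∀ᵐ ω ∂μ, |γ (true, d', X ω) * πd (X ω)| ≤ Cγ := hπd_le.mono fun ω hω => by
    rw [abs_mul]
    nlinarith [abs_nonneg (γ (true, d', X ω)), abs_nonneg (πd (X ω)), hγb (true, d', X ω)]
  calc ∫ ω, γ (true, d', X ω) * (if D ω = d then (1 : ℝ) else 0) ∂μ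
      = ∫ ω, γ (true, d', X ω) * πd (X ω) ∂μ :=
        IsCondExpVersion.integral_comp_mul hπdver hX (measurable_const.ite hDd measurable_const)
          (fun _ => abs_boole_le_one _) hπd hγ₁ (ae_of_all _ fun _ => hγb _)
    _ = ∫ ω, γ (true, d', X ω) * πd (X ω) / (ρ (X ω) * πd' (X ω)) * (if S ω then 1 else 0)
          * (if D ω = d' then 1 else 0) ∂μ :=
        integral_comp_eq_integral_ipw (h := fun x => γ (true, d', x) * πd x) hS hD hX hπd' hρ hε
          hπε hρε hπd'ver ((IsCondExpVersion.restrict_iff hX).2 hρver) (hγ₁.mul hπd) hγπd_le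
    _ = _ := by
        congr with ω
        by_cases hd : D ω = d' <;> by_cases hs : S ω <;> simp [hd, hs]
        ring
end

section
/- Multiply robust identity in γ for dynamic sample selection: let π₀(d;X) = P(D=d|X), ρ₀(1;d,X,M) = P(S=1|D=d,X,M), γ₀(1,d,X,M) = E[Y|S=1,D=d,X,M], and ω₀(1,d;X) = E[γ₀(1,d,X,M)|D=d,X], with π₀, ρ₀ ≥ ε > 0. Then for ANY bounded measurable γ(1,d,x,m), E[ ω₀(1,d;X) + (1{D=d} S)/(π₀(d;X) ρ₀(1;d,X,M)) · (SY − γ(1,d,X,M)) + (1{D=d})/(π₀(d;X)) · (γ(1,d,X,M) − ω₀(1,d;X)) ] = E[ω₀(1,d;X)]. That is, misspecifying γ leaves the moment unchanged. -/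
/-!
Write the integrand as `ω₀(X)` plus three residuals, each a bounded weight in the conditioning
variables times the gap between a quantity and its conditional mean:
`(Y - γ₀(X,M)) / (π₀ ρ₀)` on `{S, D = d}` given `(X, M)`,
`(S - ρ₀(X,M)) (γ₀ - γ)(X,M) / (π₀ ρ₀)` on `{D = d}` given `(X, M)`, and
`(γ₀(X,M) - ω₀(X)) / π₀` on `{D = d}` given `X`.
Each residual integrates to zero, so `γ` drops out.
-/

open MeasureTheory

theorem abs_div_le_div_of_abs_le {a b C ε : ℝ} (hε : 0 < ε) (ha : |a| ≤ C) (hb : ε ≤ b) :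
    |a / b| ≤ C / ε := by
  rw [abs_div, abs_of_pos (hε.trans_le hb)]
  exact div_le_div₀ ((abs_nonneg a).trans ha) ha hε hb

theorem abs_div_mul_le_div_mul {a b c C ε : ℝ} (hε : 0 < ε) (ha : |a| ≤ C) (hb : ε ≤ b)
    (hc : ε ≤ c) : |a / (b * c)| ≤ C / (ε * ε) :=
  abs_div_le_div_of_abs_le (mul_pos hε hε) ha (mul_le_mul hb hc hε.le (hε.le.trans hb))

-- If `F` is not integrable, neither is `F + R`, and both sides are the junk value `0`.
theorem integral_add_eq_of_integral_eq_zero {α G : Type*} [MeasurableSpace α] {μ : Measure α}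
    [NormedAddCommGroup G] [NormedSpace ℝ G] {F R : α → G} (hR : Integrable R μ)
    (h : ∫ x, R x ∂μ = 0) : ∫ x, F x + R x ∂μ = ∫ x, F x ∂μ := by
  by_cases hF : Integrable F μ
  · rw [integral_add hF hR, h, add_zero]
  · rw [integral_undef hF, integral_undef ((integrable_add_iff_integrable_left' hR).not.2 hF)]

section Conditioning

variable {Ω E : Type*} {mΩ : MeasurableSpace Ω} [mE : MeasurableSpace E] {μ : Measure Ω}
  {g : Ω → E}

theorem setIntegral_preimage_restrict (hg : Measurable g) {B : Set E} (hB : MeasurableSet B)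
    (A : Set Ω) (f : Ω → ℝ) :
    ∫ ω in g ⁻¹' B, f ω ∂μ.restrict A = ∫ ω in A ∩ g ⁻¹' B, f ω ∂μ := by
  rw [Measure.restrict_restrict (hg hB), Set.inter_comm]

theorem integrableOn_comp_mul_of_abs_le (hg : Measurable g) {A : Set Ω} {f : Ω → ℝ}
    (hf : IntegrableOn f A μ) {φ : E → ℝ} (hφ : Measurable φ) {C : ℝ} (hφC : ∀ x, |φ x| ≤ C) :
    IntegrableOn (fun ω => φ (g ω) * f ω) A μ :=
  Integrable.bdd_mul hf (hφ.comp hg).aestronglyMeasurable (ae_of_all _ fun ω => hφC (g ω))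

variable [IsFiniteMeasure μ]

-- On each level set `{φ ≤ n}` the hypothesis applies to honest integrals; monotone convergence
-- then bounds `∫⁻ φ ∘ g` by `∫⁻ ‖f‖ₑ`.
theorem integrable_comp_of_forall_setIntegral_preimage_eq (hg : Measurable g)
    {f : Ω → ℝ} (hf : Integrable f μ) {φ : E → ℝ} (hφ : Measurable φ) (hφ_nonneg : ∀ x, 0 ≤ φ x)
    (h : ∀ B, MeasurableSet B → ∫ ω in g ⁻¹' B, f ω ∂μ = ∫ ω in g ⁻¹' B, φ (g ω) ∂μ) :
    Integrable (fun ω => φ (g ω)) μ := by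
  set s : ℕ → Set Ω := fun n => g ⁻¹' {x | φ x ≤ n}
  have hB : ∀ n : ℕ, MeasurableSet {x | φ x ≤ n} := fun n => hφ measurableSet_Iic
  have hs_mono : Monotone s := fun m n hmn ω (hω : φ (g ω) ≤ m) =>
    show φ (g ω) ≤ n from hω.trans (by exact_mod_cast hmn)
  have hs_union : ⋃ n, s n = Set.univ :=
    Set.eq_univ_of_forall fun ω => Set.mem_iUnion.2 (exists_nat_ge (φ (g ω)))
  have hs_bound : ∀ n, ∫⁻ ω in s n, ENNReal.ofReal (φ (g ω)) ∂μ ≤ ∫⁻ ω, ‖f ω‖ₑ ∂μ := by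
    intro n
    have hint : IntegrableOn (fun ω => φ (g ω)) (s n) μ :=
      IntegrableOn.of_bound (measure_lt_top _ _) (hφ.comp hg).aestronglyMeasurable.restrict n
        ((ae_restrict_iff' (hg (hB n))).2 (ae_of_all _ fun ω hω => by
          rwa [Real.norm_eq_abs, abs_of_nonneg (hφ_nonneg _)]))
    rw [← ofReal_integral_eq_lintegral_ofReal hint (ae_of_all _ fun ω => hφ_nonneg _),
      ← h _ (hB n)]
    exact (Real.ofReal_le_enorm _).trans
      ((enorm_integral_le_lintegral_enorm _).trans (setLIntegral_le_lintegral _ _))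
  refine ⟨(hφ.comp hg).aestronglyMeasurable, ?_⟩
  calc ∫⁻ ω, ‖φ (g ω)‖ₑ ∂μ = ∫⁻ ω in ⋃ n, s n, ENNReal.ofReal (φ (g ω)) ∂μ := by
        rw [hs_union, Measure.restrict_univ]
        exact lintegral_congr fun ω => Real.enorm_eq_ofReal (hφ_nonneg _)
    _ = ⨆ n, ∫⁻ ω in s n, ENNReal.ofReal (φ (g ω)) ∂μ :=
        setLIntegral_iUnion_of_directed _ hs_mono.directed_le
    _ ≤ ∫⁻ ω, ‖f ω‖ₑ ∂μ := iSup_le hs_bound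
    _ < ⊤ := hf.2

-- `f₁` and `f₂` have the same conditional expectation given `g`, out of which the bounded
-- `g`-measurable weight `φ ∘ g` pulls.
theorem integral_comp_mul_eq_of_forall_setIntegral_preimage_eq (hg : Measurable g)
    {f₁ f₂ : Ω → ℝ} (hf₁ : Integrable f₁ μ) (hf₂ : Integrable f₂ μ)
    (h : ∀ B, MeasurableSet B → ∫ ω in g ⁻¹' B, f₁ ω ∂μ = ∫ ω in g ⁻¹' B, f₂ ω ∂μ)
    {φ : E → ℝ} (hφ : Measurable φ) {C : ℝ} (hφC : ∀ x, |φ x| ≤ C) :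
    ∫ ω, φ (g ω) * f₁ ω ∂μ = ∫ ω, φ (g ω) * f₂ ω ∂μ := by
  set m := MeasurableSpace.comap g mE
  have hm : m ≤ mΩ := hg.comap_le
  have hφg : StronglyMeasurable[m] (fun ω => φ (g ω)) :=
    (hφ.comp (Measurable.of_comap_le le_rfl)).stronglyMeasurable
  have hcond : μ[f₁|m] =ᵐ[μ] μ[f₂|m] := by
    refine ae_eq_condExp_of_forall_setIntegral_eq hm hf₂
      (fun s _ _ => integrable_condExp.integrableOn) (fun s hs _ => ?_)
      stronglyMeasurable_condExp.aestronglyMeasurable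
    rw [setIntegral_condExp hm hf₁ hs]
    obtain ⟨B, hB, rfl⟩ := hs
    exact h B hB
  have hbound : ∀ᵐ ω ∂μ, ‖φ (g ω)‖ ≤ C := ae_of_all _ fun ω => hφC (g ω)
  have hpull₁ := condExp_stronglyMeasurable_mul_of_bound hm hφg hf₁ C hbound
  have hpull₂ := condExp_stronglyMeasurable_mul_of_bound hm hφg hf₂ C hbound
  calc ∫ ω, φ (g ω) * f₁ ω ∂μ = ∫ ω, (μ[(fun ω => φ (g ω)) * f₁|m]) ω ∂μ :=
        (integral_condExp hm).symm
    _ = ∫ ω, (μ[(fun ω => φ (g ω)) * f₂|m]) ω ∂μ :=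
        integral_congr_ae (hpull₁.trans (((Filter.EventuallyEq.refl _ _).mul hcond).trans
          hpull₂.symm))
    _ = ∫ ω, φ (g ω) * f₂ ω ∂μ := integral_condExp hm

theorem integrableOn_comp_of_forall_setIntegral_inter_preimage_eq (hg : Measurable g)
    {A : Set Ω} {f : Ω → ℝ} (hf : IntegrableOn f A μ) {φ : E → ℝ} (hφ : Measurable φ)
    (hφ_nonneg : ∀ x, 0 ≤ φ x)
    (h : ∀ B, MeasurableSet B →
      ∫ ω in A ∩ g ⁻¹' B, f ω ∂μ = ∫ ω in A ∩ g ⁻¹' B, φ (g ω) ∂μ) :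
    IntegrableOn (fun ω => φ (g ω)) A μ :=
  integrable_comp_of_forall_setIntegral_preimage_eq hg hf hφ hφ_nonneg fun B hB => by
    simpa only [setIntegral_preimage_restrict hg hB] using h B hB

theorem integral_add_indicator_comp_mul_sub_eq (F : Ω → ℝ) (hg : Measurable g) {A : Set Ω}
    (hA : MeasurableSet A) {f₁ f₂ : Ω → ℝ} (hf₁ : IntegrableOn f₁ A μ)
    (hf₂ : IntegrableOn f₂ A μ)
    (h : ∀ B, MeasurableSet B →
      ∫ ω in A ∩ g ⁻¹' B, f₁ ω ∂μ = ∫ ω in A ∩ g ⁻¹' B, f₂ ω ∂μ)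
    {φ : E → ℝ} (hφ : Measurable φ) {C : ℝ} (hφC : ∀ x, |φ x| ≤ C) :
    ∫ ω, F ω + A.indicator (fun ω => φ (g ω) * (f₁ ω - f₂ ω)) ω ∂μ = ∫ ω, F ω ∂μ := by
  have hint₁ := integrableOn_comp_mul_of_abs_le hg hf₁ hφ hφC
  have hint₂ := integrableOn_comp_mul_of_abs_le hg hf₂ hφ hφC
  refine integral_add_eq_of_integral_eq_zero ((integrable_indicator_iff hA).2 ?_) ?_
  · simp only [mul_sub]
    exact hint₁.sub hint₂
  rw [integral_indicator hA]
  simp only [mul_sub]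
  rw [integral_sub hint₁ hint₂, sub_eq_zero]
  exact integral_comp_mul_eq_of_forall_setIntegral_preimage_eq hg hf₁ hf₂
    (fun B hB => by simpa only [setIntegral_preimage_restrict hg hB] using h B hB) hφ hφC

end Conditioning

theorem weighted_moment_eq_add_residuals {P : Prop} [Decidable P] (s : Bool)
    (w y γ γ₀ π ρ : ℝ) (hπ : π ≠ 0) (hρ : ρ ≠ 0) :
    w + ((if P then (1 : ℝ) else 0) * (if s then (1 : ℝ) else 0) / (π * ρ))
          * ((if s then y else 0) - γ) + ((if P then (1 : ℝ) else 0) / π) * (γ - w)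
      = w + (if s = true ∧ P then 1 / (π * ρ) * (y - γ₀) else 0)
        + (if P then (γ₀ - γ) / (π * ρ) * ((if s then 1 else 0) - ρ) else 0)
        + (if P then 1 / π * (γ₀ - w) else 0) := by
  by_cases hP : P <;> cases s <;>
    simp only [hP, Bool.false_eq_true, and_false, and_true, if_true, if_false] <;>
    field_simp <;> ring

theorem stmt_19_general {Ω 𝒟 𝒳 ℳ : Type*} [MeasurableSpace Ω] [MeasurableSpace 𝒟]
    [MeasurableSpace 𝒳] [MeasurableSpace ℳ]
    [MeasurableSingletonClass 𝒟] [DecidableEq 𝒟]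
    (μ : Measure Ω) [IsProbabilityMeasure μ]
    (Y : Ω → ℝ) (S : Ω → Bool) (D : Ω → 𝒟) (X : Ω → 𝒳) (M : Ω → ℳ)
    (hY : Measurable Y) (hS : Measurable S) (hD : Measurable D) (hX : Measurable X)
    (hM : Measurable M) (CY : ℝ) (hYb : ∀ ω, |Y ω| ≤ CY) (d : 𝒟)
    (π₀ : 𝒳 → ℝ) (ρ₀ : 𝒳 × ℳ → ℝ) (γ₀ : 𝒳 × ℳ → ℝ) (ω₀ : 𝒳 → ℝ)
    (hπ₀ : Measurable π₀) (hρ₀ : Measurable ρ₀) (hγ₀ : Measurable γ₀) (hω₀ : Measurable ω₀)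
    (ε : ℝ) (hε : 0 < ε) (hπε : ∀ x, ε ≤ π₀ x) (hρε : ∀ p, ε ≤ ρ₀ p)
    (Cγ₀ : ℝ) (hγ₀b : ∀ p, |γ₀ p| ≤ Cγ₀) (Cω₀ : ℝ) (hω₀b : ∀ x, |ω₀ x| ≤ Cω₀)
    -- `ρ₀` is a version of `P(S = 1 | D = d, X, M)`:
    (hρver : ∀ B : Set (𝒳 × ℳ), MeasurableSet B →
      ∫ ω in {ω | D ω = d} ∩ (fun ω => (X ω, M ω)) ⁻¹' B, (if S ω then (1 : ℝ) else 0) ∂μ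
        = ∫ ω in {ω | D ω = d} ∩ (fun ω => (X ω, M ω)) ⁻¹' B, ρ₀ (X ω, M ω) ∂μ)
    -- `γ₀` is a version of `E[Y | S = 1, D = d, X, M]`:
    (hγver : ∀ B : Set (𝒳 × ℳ), MeasurableSet B →
      ∫ ω in {ω | S ω = true ∧ D ω = d} ∩ (fun ω => (X ω, M ω)) ⁻¹' B, Y ω ∂μ
        = ∫ ω in {ω | S ω = true ∧ D ω = d} ∩ (fun ω => (X ω, M ω)) ⁻¹' B,
            γ₀ (X ω, M ω) ∂μ)
    -- `ω₀` is a version of `E[γ₀(1,d,X,M) | D = d, X]`: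
    (hωver : ∀ B : Set 𝒳, MeasurableSet B →
      ∫ ω in {ω | D ω = d} ∩ X ⁻¹' B, γ₀ (X ω, M ω) ∂μ
        = ∫ ω in {ω | D ω = d} ∩ X ⁻¹' B, ω₀ (X ω) ∂μ)
    -- an arbitrary bounded measurable `γ(1, d, ·, ·)`:
    (γ : 𝒳 × ℳ → ℝ) (hγ : Measurable γ) (Cγ : ℝ) (hγb : ∀ p, |γ p| ≤ Cγ) :
    ∫ ω, (ω₀ (X ω)
        + ((if D ω = d then (1 : ℝ) else 0) * (if S ω then (1 : ℝ) else 0)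
            / (π₀ (X ω) * ρ₀ (X ω, M ω)))
          * ((if S ω then Y ω else 0) - γ (X ω, M ω))
        + ((if D ω = d then (1 : ℝ) else 0) / π₀ (X ω))
          * (γ (X ω, M ω) - ω₀ (X ω))) ∂μ
      = ∫ ω, ω₀ (X ω) ∂μ := by
  set g : Ω → 𝒳 × ℳ := fun ω => (X ω, M ω)
  have hg : Measurable g := hX.prodMk hM
  set A := {ω | D ω = d}
  set AS := {ω | S ω = true ∧ D ω = d}
  have hA : MeasurableSet A := hD (measurableSet_singleton d)
  have hAS : MeasurableSet AS := (hS (measurableSet_singleton true)).inter hA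
  have bdd : ∀ {f : Ω → ℝ} (C : ℝ), Measurable f → (∀ ω, |f ω| ≤ C) → Integrable f μ :=
    fun C hf hC => Integrable.of_bound hf.aestronglyMeasurable C (ae_of_all _ hC)
  have hIS : Integrable (fun ω => if S ω then (1 : ℝ) else 0) μ :=
    bdd 1 (Measurable.ite (hS (measurableSet_singleton true)) measurable_const measurable_const)
      fun ω => by split <;> simp
  have hγ₀i := bdd (f := fun ω => γ₀ (g ω)) Cγ₀ (hγ₀.comp hg) fun ω => hγ₀b _
  have hρi : IntegrableOn (fun ω => ρ₀ (g ω)) A μ :=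
    integrableOn_comp_of_forall_setIntegral_inter_preimage_eq hg hIS.integrableOn hρ₀
      (fun p => (hε.trans_le (hρε p)).le) hρver
  calc _ = ∫ ω, ω₀ (X ω)
          + AS.indicator (fun ω => 1 / (π₀ (X ω) * ρ₀ (g ω)) * (Y ω - γ₀ (g ω))) ω
          + A.indicator (fun ω => (γ₀ (g ω) - γ (g ω)) / (π₀ (X ω) * ρ₀ (g ω))
              * ((if S ω then 1 else 0) - ρ₀ (g ω))) ω
          + A.indicator (fun ω => 1 / π₀ (X ω) * (γ₀ (g ω) - ω₀ (X ω))) ω ∂μ :=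
        integral_congr_ae (ae_of_all _ fun ω => by
          simp only [Set.indicator_apply]
          exact weighted_moment_eq_add_residuals _ _ _ _ _ _ _ (hε.trans_le (hπε _)).ne'
            (hε.trans_le (hρε _)).ne')
    _ = ∫ ω, ω₀ (X ω) ∂μ :=
      (integral_add_indicator_comp_mul_sub_eq _ hX hA hγ₀i.integrableOn
        (bdd Cω₀ (hω₀.comp hX) fun ω => hω₀b _).integrableOn hωver (by fun_prop)
        fun x => abs_div_le_div_of_abs_le hε abs_one.le (hπε x)).trans <|
      (integral_add_indicator_comp_mul_sub_eq _ hg hA hIS.integrableOn hρi hρver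
        (φ := fun p => (γ₀ p - γ p) / (π₀ p.1 * ρ₀ p)) (by fun_prop)
        fun p => abs_div_mul_le_div_mul hε
          ((abs_sub _ _).trans (add_le_add (hγ₀b p) (hγb p))) (hπε _) (hρε _)).trans <|
      integral_add_indicator_comp_mul_sub_eq _ hg hAS (bdd CY hY hYb).integrableOn
        hγ₀i.integrableOn hγver (φ := fun p => 1 / (π₀ p.1 * ρ₀ p)) (by fun_prop)
        fun p => abs_div_mul_le_div_mul hε abs_one.le (hπε _) (hρε _)

/-- Multiply robust identity in `γ` for dynamic sample selection: with `π₀` a version of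
`P(D=d|X)`, `ρ₀` a version of `P(S=1|D=d,X,M)`, `γ₀` a version of `E[Y|S=1,D=d,X,M]`,
and `ω₀` a version of `E[γ₀(1,d,X,M)|D=d,X]`, all propensities `≥ ε > 0`, for ANY
bounded measurable `γ`,
`E[ ω₀(X) + 1{D=d}S/(π₀(X)ρ₀(X,M)) (SY − γ(X,M)) + 1{D=d}/π₀(X) (γ(X,M) − ω₀(X)) ]
  = E[ω₀(X)]`. -/
theorem stmt_19 {Ω 𝒟 𝒳 ℳ : Type*} [MeasurableSpace Ω] [MeasurableSpace 𝒟]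
    [MeasurableSpace 𝒳] [MeasurableSpace ℳ]
    [MeasurableSingletonClass 𝒟] [DecidableEq 𝒟]
    (μ : Measure Ω) [IsProbabilityMeasure μ]
    (Y : Ω → ℝ) (S : Ω → Bool) (D : Ω → 𝒟) (X : Ω → 𝒳) (M : Ω → ℳ)
    (hY : Measurable Y) (hS : Measurable S) (hD : Measurable D) (hX : Measurable X)
    (hM : Measurable M) (CY : ℝ) (hYb : ∀ ω, |Y ω| ≤ CY) (d : 𝒟)
    (π₀ : 𝒳 → ℝ) (ρ₀ : 𝒳 × ℳ → ℝ) (γ₀ : 𝒳 × ℳ → ℝ) (ω₀ : 𝒳 → ℝ)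
    (hπ₀ : Measurable π₀) (hρ₀ : Measurable ρ₀) (hγ₀ : Measurable γ₀) (hω₀ : Measurable ω₀)
    (ε : ℝ) (hε : 0 < ε) (hπε : ∀ x, ε ≤ π₀ x) (hρε : ∀ p, ε ≤ ρ₀ p)
    (Cγ₀ : ℝ) (hγ₀b : ∀ p, |γ₀ p| ≤ Cγ₀) (Cω₀ : ℝ) (hω₀b : ∀ x, |ω₀ x| ≤ Cω₀)
    -- `π₀` is a version of `P(D = d | X)`:
    (hπver : ∀ B : Set 𝒳, MeasurableSet B →
      ∫ ω in X ⁻¹' B, (if D ω = d then (1 : ℝ) else 0) ∂μ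
        = ∫ ω in X ⁻¹' B, π₀ (X ω) ∂μ)
    -- `ρ₀` is a version of `P(S = 1 | D = d, X, M)`:
    (hρver : ∀ B : Set (𝒳 × ℳ), MeasurableSet B →
      ∫ ω in {ω | D ω = d} ∩ (fun ω => (X ω, M ω)) ⁻¹' B, (if S ω then (1 : ℝ) else 0) ∂μ
        = ∫ ω in {ω | D ω = d} ∩ (fun ω => (X ω, M ω)) ⁻¹' B, ρ₀ (X ω, M ω) ∂μ)
    -- `γ₀` is a version of `E[Y | S = 1, D = d, X, M]`:
    (hγver : ∀ B : Set (𝒳 × ℳ), MeasurableSet B →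
      ∫ ω in {ω | S ω = true ∧ D ω = d} ∩ (fun ω => (X ω, M ω)) ⁻¹' B, Y ω ∂μ
        = ∫ ω in {ω | S ω = true ∧ D ω = d} ∩ (fun ω => (X ω, M ω)) ⁻¹' B,
            γ₀ (X ω, M ω) ∂μ)
    -- `ω₀` is a version of `E[γ₀(1,d,X,M) | D = d, X]`:
    (hωver : ∀ B : Set 𝒳, MeasurableSet B →
      ∫ ω in {ω | D ω = d} ∩ X ⁻¹' B, γ₀ (X ω, M ω) ∂μ
        = ∫ ω in {ω | D ω = d} ∩ X ⁻¹' B, ω₀ (X ω) ∂μ)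
    -- an arbitrary bounded measurable `γ(1, d, ·, ·)`:
    (γ : 𝒳 × ℳ → ℝ) (hγ : Measurable γ) (Cγ : ℝ) (hγb : ∀ p, |γ p| ≤ Cγ) :
    ∫ ω, (ω₀ (X ω)
        + ((if D ω = d then (1 : ℝ) else 0) * (if S ω then (1 : ℝ) else 0)
            / (π₀ (X ω) * ρ₀ (X ω, M ω)))
          * ((if S ω then Y ω else 0) - γ (X ω, M ω))
        + ((if D ω = d then (1 : ℝ) else 0) / π₀ (X ω))
          * (γ (X ω, M ω) - ω₀ (X ω))) ∂μ
      = ∫ ω, ω₀ (X ω) ∂μ :=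
  stmt_19_general μ Y S D X M hY hS hD hX hM CY hYb d π₀ ρ₀ γ₀ ω₀ hπ₀ hρ₀ hγ₀ hω₀ ε hε hπε hρε Cγ₀
    hγ₀b Cω₀ hω₀b hρver hγver hωver γ hγ Cγ hγb
end
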